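/- arXiv:1912.01371 — 9 statements merged into one kernel-verified Lean document; each statement's English description precedes it below -/
import Mathlib

section
/- A homogeneous polynomial p of degree 2d in n variables is a sum of squares of k-nomials if and only if p(x) = z(x)ᵀ Q z(x), where z(x) is the vector of all monomials of degree d in x₁,...,xₙ and Q is a positive semidefinite matrix of factor width at most k. -/
open Matrix

/-- `A` has factor width at most `k`: `A = V * Vᵀ` where every column of `V`
has at most `k` nonzero entries. -/
def HasFactorWidthLE {ι : Type*} [Fintype ι] (A : Matrix ι ι ℝ) (k : ℕ) : Prop :=
  ∃ (m : ℕ) (V : Matrix ι (Fin m) ℝ),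
    A = V * Vᵀ ∧ ∀ j, {i | V i j ≠ 0}.ncard ≤ k

/-- The cone `FW^n_k` of psd `n × n` matrices of factor width at most `k`. -/
def FW (n k : ℕ) : Set (Matrix (Fin n) (Fin n) ℝ) :=
  {A | A.PosSemidef ∧ HasFactorWidthLE A k}

/-- The principal submatrix of `A` indexed by the finite set `K`. -/
def principalSub {ι : Type*} (A : Matrix ι ι ℝ) (K : Finset ι) :
    Matrix K K ℝ :=
  A.submatrix (fun i => (i : ι)) (fun j => (j : ι))

/-- The cone `(FW^n_k)^*`: symmetric matrices all of whose `k × k` principal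
submatrices are psd. -/
def FWdual (n k : ℕ) : Set (Matrix (Fin n) (Fin n) ℝ) :=
  {A | A.IsSymm ∧ ∀ K : Finset (Fin n), K.card = k → (principalSub A K).PosSemidef}

/-- The dual cone (within symmetric matrices) with respect to the trace inner
product `⟨Y, X⟩ = trace (Y * Xᵀ)`. -/
def dualSet {n : ℕ} (C : Set (Matrix (Fin n) (Fin n) ℝ)) :
    Set (Matrix (Fin n) (Fin n) ℝ) :=
  {Y | Y.IsSymm ∧ ∀ X ∈ C, 0 ≤ (Y * Xᵀ).trace}

/-- `A` spans an extreme ray of the cone `C`. -/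
def SpansExtremeRay {E : Type*} [AddCommMonoid E] [Module ℝ E]
    (C : Set E) (A : E) : Prop :=
  A ∈ C ∧ A ≠ 0 ∧ ∀ X Y, X ∈ C → Y ∈ C → A = X + Y →
    ∃ a b : ℝ, 0 ≤ a ∧ 0 ≤ b ∧ X = a • A ∧ Y = b • A

/-- `p` is a sum of squares of `k`-nomials (polynomials with at most `k` monomials). -/
def IsSOkS {n : ℕ} (k : ℕ) (p : MvPolynomial (Fin n) ℝ) : Prop :=
  ∃ (m : ℕ) (q : Fin m → MvPolynomial (Fin n) ℝ),
    (∀ i, (q i).support.card ≤ k) ∧ p = ∑ i, (q i) ^ 2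

/-! If `p = ∑ₗ qₗ²` is homogeneous of degree `2d`, then every `qₗ` is homogeneous of degree `d`:
if `D` is the largest (or the smallest) degree of a monomial occurring in some `qₗ`, the degree-`2D`
part of `p` is `∑ₗ ((qₗ)_D)²`, a sum of squares of polynomials that are not all zero, hence nonzero
over an ordered field; so `D = d`. The coefficient matrix `V` of the `qₗ` in the degree-`d`
monomials `z` then gives the Gram matrix `Q = V Vᵀ`, and the nonzero entries of the `l`-th column
of `V` are the coefficients of `qₗ`. Conversely, `Q = V Vᵀ` gives `p = ∑ₗ (∑ᵢ Vᵢₗ zᵢ)²`. -/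

open Finsupp

namespace MvPolynomial

variable {σ R ι : Type*}

section CommSemiring

variable [CommSemiring R]

lemma homogeneousComponent_mul_of_extremal {D : ℕ} {a b : MvPolynomial σ R}
    (h : ∀ i ∈ a.support, ∀ j ∈ b.support, i.degree + j.degree = D + D → i.degree = D) :
    homogeneousComponent (D + D) (a * b) =
      homogeneousComponent D a * homogeneousComponent D b := by
  classical
  ext m
  simp only [coeff_homogeneousComponent, coeff_mul]
  split_ifs with hm
  · refine Finset.sum_congr rfl fun x hx => ?_
    have hx : x.1.degree + x.2.degree = D + D := by
      rw [← map_add, Finset.HasAntidiagonal.mem_antidiagonal.1 hx, hm]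
    by_cases h1 : coeff x.1 a = 0
    · simp [h1]
    by_cases h2 : coeff x.2 b = 0
    · simp [h2]
    have := h _ (mem_support_iff.2 h1) _ (mem_support_iff.2 h2) hx
    rw [if_pos this, if_pos (by omega)]
  · refine (Finset.sum_eq_zero fun x hx => ?_).symm
    have hx := Finset.HasAntidiagonal.mem_antidiagonal.1 hx
    by_cases h1 : x.1.degree = D
    · by_cases h2 : x.2.degree = D
      · exact absurd (by rw [← hx, map_add, h1, h2]) hm
      · rw [if_neg h2, mul_zero]
    · rw [if_neg h1, zero_mul]

lemma sum_sq_sum_monomial [Fintype ι] {κ : Type*} [Fintype κ] (z : ι → σ →₀ ℕ)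
    (V : Matrix ι κ R) :
    ∑ l, (∑ i, monomial (z i) (V i l)) ^ 2 = ∑ i, ∑ j, monomial (z i + z j) ((V * Vᵀ) i j) := by
  simp only [sq, Finset.sum_mul_sum, monomial_mul, Matrix.mul_apply, Matrix.transpose_apply,
    map_sum]
  rw [Finset.sum_comm]
  exact Finset.sum_congr rfl fun i _ => Finset.sum_comm

lemma card_support_sum_monomial_le [Fintype ι] (z : ι → σ →₀ ℕ) (c : ι → R) :
    (∑ i, monomial (z i) (c i)).support.card ≤ {i | c i ≠ 0}.ncard := by
  classical
  have hsupp : (∑ i, monomial (z i) (c i)).support ⊆ {i | c i ≠ 0}.toFinset.image z := by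
    intro m hm
    obtain ⟨i, -, hi⟩ := Finset.mem_biUnion.1 (support_sum hm)
    have hci : c i ≠ 0 := fun h0 => by simp [h0] at hi
    simp only [Finset.mem_image, Set.mem_toFinset]
    exact ⟨i, hci, (Finset.mem_singleton.1 (support_monomial_subset hi)).symm⟩
  rw [Set.ncard_eq_toFinset_card']
  exact (Finset.card_le_card hsupp).trans Finset.card_image_le

lemma ncard_coeff_ne_zero_le_card_support {z : ι → σ →₀ ℕ} (hz : z.Injective)
    (q : MvPolynomial σ R) : {i | coeff (z i) q ≠ 0}.ncard ≤ q.support.card := by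
  rw [← Set.ncard_coe_finset]
  exact Set.ncard_le_ncard_of_injOn z (fun i hi => mem_support_iff.2 hi) hz.injOn
    (Finset.finite_toSet _)

lemma sum_monomial_coeff_of_support_subset_range [Fintype ι] {z : ι → σ →₀ ℕ}
    (hz : z.Injective) {q : MvPolynomial σ R} (hq : ∀ m ∈ q.support, m ∈ Set.range z) :
    ∑ i, monomial (z i) (coeff (z i) q) = q := by
  classical
  ext m
  simp only [coeff_sum, coeff_monomial]
  by_cases hm : m ∈ Set.range z
  · obtain ⟨j, rfl⟩ := hm
    simp [hz.eq_iff]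
  · have : coeff m q = 0 := notMem_support_iff.1 fun h => hm (hq m h)
    simp_all

end CommSemiring

section OrderedField

variable [Field R] [LinearOrder R] [IsStrictOrderedRing R] [Fintype ι]

lemma eq_zero_of_sum_sq_eq_zero {q : ι → MvPolynomial σ R} (h : ∑ l, q l ^ 2 = 0) (l : ι) :
    q l = 0 := by
  refine MvPolynomial.funext fun x => ?_
  have hx : ∑ i, eval x (q i) ^ 2 = 0 := by simpa using congrArg (eval x) h
  simpa using (Finset.sum_eq_zero_iff_of_nonneg fun i _ => sq_nonneg _).1 hx l (Finset.mem_univ l)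

lemma homogeneousComponent_sum_sq_ne_zero {q : ι → MvPolynomial σ R} {D : ℕ}
    (hD : ∃ l, ∃ m ∈ (q l).support, m.degree = D)
    (hext : ∀ l, ∀ i ∈ (q l).support, ∀ j ∈ (q l).support,
      i.degree + j.degree = D + D → i.degree = D) :
    homogeneousComponent (D + D) (∑ l, q l ^ 2) ≠ 0 := by
  obtain ⟨l, m, hm, rfl⟩ := hD
  simp only [map_sum, sq, homogeneousComponent_mul_of_extremal (hext _)]
  intro h
  have hl := eq_zero_of_sum_sq_eq_zero (q := fun l => homogeneousComponent m.degree (q l))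
    (by simpa only [sq] using h) l
  have := congrArg (coeff m) hl
  rw [coeff_homogeneousComponent, if_pos rfl, coeff_zero] at this
  exact mem_support_iff.1 hm this

theorem IsHomogeneous.of_sum_sq {q : ι → MvPolynomial σ R} {d : ℕ}
    (hp : (∑ l, q l ^ 2).IsHomogeneous (2 * d)) (l : ι) : (q l).IsHomogeneous d := by
  classical
  set degs : Finset ℕ := Finset.univ.biUnion fun l => (q l).support.image degree
  have mem_degs : ∀ l, ∀ m ∈ (q l).support, m.degree ∈ degs := fun l m hm =>
    Finset.mem_biUnion.2 ⟨l, Finset.mem_univ l, Finset.mem_image_of_mem _ hm⟩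
  have eq_of_extremal : ∀ D ∈ degs, (∀ l, ∀ i ∈ (q l).support, ∀ j ∈ (q l).support,
      i.degree + j.degree = D + D → i.degree = D) → D = d := by
    intro D hD hext
    by_contra hne
    refine homogeneousComponent_sum_sq_ne_zero ?_ hext ?_
    · simpa [degs] using hD
    · rw [homogeneousComponent_of_mem hp, if_neg (by omega)]
  intro m hm
  have hne : degs.Nonempty := ⟨_, mem_degs l m (mem_support_iff.2 hm)⟩
  have hmax := eq_of_extremal (degs.max' hne) (degs.max'_mem hne) fun l i hi j hj h => by
    have := degs.le_max' _ (mem_degs l i hi)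
    have := degs.le_max' _ (mem_degs l j hj)
    omega
  have hmin := eq_of_extremal (degs.min' hne) (degs.min'_mem hne) fun l i hi j hj h => by
    have := degs.min'_le _ (mem_degs l i hi)
    have := degs.min'_le _ (mem_degs l j hj)
    omega
  have := degs.le_max' _ (mem_degs l m (mem_support_iff.2 hm))
  have := degs.min'_le _ (mem_degs l m (mem_support_iff.2 hm))
  rw [Pi.one_def, ← degree_eq_weight_one]
  omega

end OrderedField

end MvPolynomial

open MvPolynomial in
theorem stmt1_general (n d k : ℕ) (p : MvPolynomial (Fin n) ℝ)
    (hp : p.IsHomogeneous (2 * d))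
    (N : ℕ)
    (z : Fin N → (Fin n →₀ ℕ)) (hz : Function.Injective z)
    (hzr : Set.range z = {m : Fin n →₀ ℕ | (m.sum fun _ e => e) = d}) :
    IsSOkS k p ↔
      ∃ Q : Matrix (Fin N) (Fin N) ℝ, Q.PosSemidef ∧ HasFactorWidthLE Q k ∧
        p = ∑ i, ∑ j, monomial (z i + z j) (Q i j) := by
  constructor
  · rintro ⟨m, q, hq_card, rfl⟩
    set V : Matrix (Fin N) (Fin m) ℝ := Matrix.of fun i l => coeff (z i) (q l)
    have hq : ∀ l, ∑ i, monomial (z i) (V i l) = q l := fun l =>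
      sum_monomial_coeff_of_support_subset_range hz fun mo hmo => by
        rw [hzr]
        exact ((hp.of_sum_sq l).degree_eq_sum_deg_support hmo).symm
    refine ⟨V * Vᵀ, ?_, ⟨m, V, rfl, fun l => (ncard_coeff_ne_zero_le_card_support hz _).trans
      (hq_card l)⟩, ?_⟩
    · simpa using posSemidef_self_mul_conjTranspose V
    · rw [← sum_sq_sum_monomial]
      exact Finset.sum_congr rfl fun l _ => by rw [hq l]
  · rintro ⟨Q, -, ⟨m, V, rfl, hV⟩, rfl⟩
    exact ⟨m, fun l => ∑ i, monomial (z i) (V i l),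
      fun l => (card_support_sum_monomial_le _ _).trans (hV l), (sum_sq_sum_monomial z V).symm⟩

open MvPolynomial in
/-- a homogeneous polynomial of degree `2d` is a sum of squares of
`k`-nomials iff it has a Gram matrix of factor width at most `k`, indexed by the
degree-`d` monomials. -/
theorem stmt1 (n d k : ℕ) (p : MvPolynomial (Fin n) ℝ)
    (hp : p.IsHomogeneous (2 * d))
    (N : ℕ) (hN : N = Nat.choose (n + d - 1) d)
    (z : Fin N → (Fin n →₀ ℕ)) (hz : Function.Injective z)
    (hzr : Set.range z = {m : Fin n →₀ ℕ | (m.sum fun _ e => e) = d}) :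
    IsSOkS k p ↔
      ∃ Q : Matrix (Fin N) (Fin N) ℝ, Q.PosSemidef ∧ HasFactorWidthLE Q k ∧
        p = ∑ i, ∑ j, monomial (z i + z j) (Q i j) :=
  stmt1_general n d k p hp N z hz hzr
end

section
/- The dual cone of FW^n_k (with respect to the trace inner product on symmetric matrices) equals the set of symmetric n×n matrices X such that every k×k principal submatrix X_K, for K ⊆ {1,...,n} with |K| = k, is positive semidefinite. -/
open Matrix

/-! Writing `X = V Vᵀ`, the pairing `⟨Y, X⟩` is `∑ⱼ vⱼᵀ Y vⱼ` over the columns `vⱼ` of `V`, and for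
a vector `v` supported on `K` one has `vᵀ Y v = v_Kᵀ Y_K v_K`. Hence both `Y ∈ (FWⁿₖ)*` and
"every `Y_K` with `|K| = k` is psd" say that `vᵀ Y v ≥ 0` for every `v` with at most `k` nonzero
entries: the rank-one matrices `v vᵀ` are the test elements of `FWⁿₖ`, and a support of size at
most `k ≤ n` can be enlarged to one of size exactly `k`. -/

section PrincipalSubmatrix

variable {ι : Type*} [Fintype ι]

lemma dotProduct_eq_of_forall_notMem {K : Finset ι} {v : ι → ℝ} (hv : ∀ i ∉ K, v i = 0)
    (w : ι → ℝ) : w ⬝ᵥ v = (fun i : K => w i) ⬝ᵥ (fun i : K => v i) := by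
  simp only [dotProduct]
  rw [Finset.sum_coe_sort K (fun i => w i * v i), Finset.sum_subset K.subset_univ]
  intro i _ hi
  rw [hv i hi, mul_zero]

lemma dotProduct_mulVec_eq_principalSub (A : Matrix ι ι ℝ) {K : Finset ι} {v : ι → ℝ}
    (hv : ∀ i ∉ K, v i = 0) :
    v ⬝ᵥ A *ᵥ v = (fun i : K => v i) ⬝ᵥ principalSub A K *ᵥ (fun i : K => v i) := by
  rw [dotProduct_comm, dotProduct_eq_of_forall_notMem hv, dotProduct_comm]
  congr 1
  funext i
  exact dotProduct_eq_of_forall_notMem hv (A i)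

lemma posSemidef_principalSub_iff [DecidableEq ι] {A : Matrix ι ι ℝ} (hA : A.IsSymm)
    (K : Finset ι) :
    (principalSub A K).PosSemidef ↔ ∀ v : ι → ℝ, (∀ i ∉ K, v i = 0) → 0 ≤ v ⬝ᵥ A *ᵥ v := by
  constructor
  · intro hK v hv
    rw [dotProduct_mulVec_eq_principalSub A hv]
    simpa using hK.dotProduct_mulVec_nonneg (fun i : K => v i)
  · intro h
    refine .of_dotProduct_mulVec_nonneg
      (isHermitian_iff_isSymm.2 (hA.submatrix _)) fun x => ?_
    set v : ι → ℝ := fun i => if hi : i ∈ K then x ⟨i, hi⟩ else 0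
    have hv : ∀ i ∉ K, v i = 0 := fun i hi => dif_neg hi
    have hxv : (fun i : K => v i) = x := by
      funext i
      simp [v]
    simpa [← hxv, dotProduct_mulVec_eq_principalSub A hv] using h v hv

end PrincipalSubmatrix

lemma trace_mul_transpose_mul_self_transpose {ι m : Type*} [Fintype ι] [Fintype m]
    (Y : Matrix ι ι ℝ) (V : Matrix ι m ℝ) :
    (Y * (V * Vᵀ)ᵀ).trace = ∑ j, Vᵀ j ⬝ᵥ Y *ᵥ Vᵀ j := by
  rw [transpose_mul, transpose_transpose, ← Matrix.mul_assoc, Matrix.trace_mul_comm]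
  simp only [trace, diag, mul_apply, transpose_apply, dotProduct, mulVec]

lemma replicateCol_mul_transpose_mem_FW {n k : ℕ} {v : Fin n → ℝ} {K : Finset (Fin n)}
    (hv : ∀ i ∉ K, v i = 0) (hK : K.card ≤ k) :
    replicateCol (Fin 1) v * (replicateCol (Fin 1) v)ᵀ ∈ FW n k := by
  refine ⟨?_, 1, replicateCol (Fin 1) v, rfl, fun _ => ?_⟩
  · simpa using posSemidef_self_mul_conjTranspose (replicateCol (Fin 1) v)
  · calc (Function.support v).ncard ≤ (K : Set (Fin n)).ncard :=
          Set.ncard_le_ncard (Function.support_subset_iff'.2 hv)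
      _ ≤ k := by rwa [Set.ncard_coe_finset]

lemma exists_card_eq_of_ncard_support_le {ι : Type*} [Fintype ι] {k : ℕ} {v : ι → ℝ}
    (hk : k ≤ Fintype.card ι) (hv : (Function.support v).ncard ≤ k) :
    ∃ K : Finset ι, K.card = k ∧ ∀ i ∉ K, v i = 0 := by
  classical
  obtain ⟨K, hsupp, -, hK⟩ := Finset.exists_subsuperset_card_eq (n := k)
    (Finset.subset_univ (Function.support v).toFinset)
    (by rwa [← Set.ncard_eq_toFinset_card']) (by simpa using hk)
  exact ⟨K, hK, fun i hi => Function.notMem_support.1 fun h => hi (hsupp (by simpa using h))⟩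

lemma dotProduct_mulVec_nonneg_of_mem_FWdual {n k : ℕ} {Y : Matrix (Fin n) (Fin n) ℝ}
    (hY : Y ∈ FWdual n k) (hkn : k ≤ n) {v : Fin n → ℝ}
    (hv : (Function.support v).ncard ≤ k) : 0 ≤ v ⬝ᵥ Y *ᵥ v := by
  obtain ⟨K, hK, hvK⟩ := exists_card_eq_of_ncard_support_le (by simpa using hkn) hv
  exact (posSemidef_principalSub_iff hY.1 K).1 (hY.2 K hK) v hvK

theorem stmt2_general (n k : ℕ) (hkn : k ≤ n) :
    dualSet (FW n k) = FWdual n k := by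
  ext Y
  constructor
  · rintro ⟨hY, hdual⟩
    refine ⟨hY, fun K hK => (posSemidef_principalSub_iff hY K).2 fun v hv => ?_⟩
    have h := hdual _ (replicateCol_mul_transpose_mem_FW hv hK.le)
    rwa [trace_mul_transpose_mul_self_transpose, Fin.sum_univ_one] at h
  · refine fun hY => ⟨hY.1, ?_⟩
    rintro X ⟨-, m, V, rfl, hV⟩
    rw [trace_mul_transpose_mul_self_transpose]
    exact Finset.sum_nonneg fun j _ => dotProduct_mulVec_nonneg_of_mem_FWdual hY hkn (hV j)

/-- the dual cone of `FW^n_k` (w.r.t. the trace inner product, within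
symmetric matrices) is exactly the set of symmetric matrices all of whose `k × k`
principal submatrices are psd. -/
theorem stmt2 (n k : ℕ) (hk : 1 ≤ k) (hkn : k ≤ n) :
    dualSet (FW n k) = FWdual n k :=
  stmt2_general n k hkn
end

section
/- Let A ∈ (FW^n_{n-1})*, i.e., a symmetric n×n matrix all of whose (n-1)×(n-1) principal submatrices are psd. If some (n-1)×(n-1) principal submatrix of A has rank at most n−3, then A is positive semidefinite. -/
/-!
Since `rank A_I ≤ n - 3`, the kernel of `A_I` has dimension at least two, so it contains a
nonzero vector orthogonal to the one remaining row of `A`; extended by zero it is a kernel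
vector `w` of `A`. If `w j ≠ 0`, any `x` can be shifted along `w` to kill its `j`-th
coordinate without changing `xᵀ A x`, which reduces the quadratic form of `A` to that of the
psd principal submatrix avoiding `j`.
-/

open Matrix

namespace Matrix

variable {ι κ R : Type*} [Fintype ι]

lemma mulVec_eq_submatrix_mulVec_of_support [NonUnitalNonAssocSemiring R] (M : Matrix κ ι R)
    (K : Finset ι) {x : ι → R} (hx : ∀ i ∉ K, x i = 0) :
    M *ᵥ x = M.submatrix id ((↑) : K → ι) *ᵥ fun k : K => x k := by
  funext i
  exact (Fintype.sum_of_injective _ Subtype.val_injective _ _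
    (fun j hj => by simp [hx j (by simpa using hj)]) fun _ => rfl).symm

lemma dotProduct_mulVec_eq_principalSub_of_support (A : Matrix ι ι ℝ) (K : Finset ι)
    {x : ι → ℝ} (hx : ∀ i ∉ K, x i = 0) :
    x ⬝ᵥ (A *ᵥ x) = (fun k : K => x k) ⬝ᵥ (principalSub A K *ᵥ fun k : K => x k) := by
  rw [mulVec_eq_submatrix_mulVec_of_support A K hx]
  exact (Fintype.sum_of_injective _ Subtype.val_injective _ _
    (fun j hj => by simp [hx j (by simpa using hj)]) fun _ => rfl).symm

lemma exists_mulVec_eq_zero_of_rank_principalSub_lt [DecidableEq ι] (A : Matrix ι ι ℝ)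
    (I : Finset ι) (h : (principalSub A I).rank + Iᶜ.card < I.card) :
    ∃ w : ι → ℝ, w ≠ 0 ∧ A *ᵥ w = 0 := by
  set B := principalSub A I
  let D : Matrix (Iᶜ : Finset ι) I ℝ := A.submatrix (↑) (↑)
  have hB : Module.finrank ℝ (LinearMap.ker B.mulVecLin) = I.card - B.rank := by
    have := LinearMap.finrank_range_add_finrank_ker B.mulVecLin
    rw [Module.finrank_fintype_fun_eq_card, Fintype.card_coe] at this
    exact (Nat.sub_eq_of_eq_add' this.symm).symm
  have hDB : LinearMap.ker (D.mulVecLin.domRestrict (LinearMap.ker B.mulVecLin)) ≠ ⊥ :=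
    LinearMap.ker_ne_bot_of_finrank_lt (by
      rw [hB, Module.finrank_fintype_fun_eq_card, Fintype.card_coe]; omega)
  obtain ⟨⟨z, hzB⟩, hzD, hz0⟩ := Submodule.exists_mem_ne_zero_of_ne_bot hDB
  set w : ι → ℝ := Function.extend (↑) z 0
  have hwz : (fun k : I => w k) = z := funext fun k => Subtype.val_injective.extend_apply _ _ k
  have hw : ∀ i ∉ I, w i = 0 := fun i hi =>
    Function.extend_apply' _ _ _ fun ⟨k, hk⟩ => hi (hk ▸ k.2)
  refine ⟨w, fun hw0 => hz0 (Subtype.ext ?_), ?_⟩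
  · exact hwz.symm.trans (by rw [hw0]; rfl)
  · rw [mulVec_eq_submatrix_mulVec_of_support A I hw, hwz]
    funext i
    by_cases hi : i ∈ I
    · exact congrFun hzB ⟨i, hi⟩
    · exact congrFun hzD ⟨i, Finset.mem_compl.mpr hi⟩

lemma posSemidef_of_mulVec_eq_zero_of_principalSub [DecidableEq ι] {A : Matrix ι ι ℝ}
    (hA : A.IsSymm) {w : ι → ℝ} (hw : A *ᵥ w = 0) {j : ι} (hj : w j ≠ 0)
    (hsub : (principalSub A {j}ᶜ).PosSemidef) : A.PosSemidef := by
  have hwA : w ᵥ* A = 0 := by rw [← mulVec_transpose, hA, hw]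
  refine PosSemidef.of_dotProduct_mulVec_nonneg (isHermitian_iff_isSymm.mpr hA) fun x => ?_
  set y := x - (x j / w j) • w
  have hy : ∀ i ∉ ({j}ᶜ : Finset ι), y i = 0 := fun i hi => by
    rw [Finset.notMem_compl, Finset.mem_singleton] at hi
    subst hi
    simp [y, div_mul_cancel₀ _ hj]
  have hxy : x ⬝ᵥ (A *ᵥ x) = y ⬝ᵥ (A *ᵥ y) := by
    simp [y, mulVec_sub, mulVec_smul, hw, sub_dotProduct, dotProduct_mulVec w, hwA]
  rw [star_trivial, hxy, dotProduct_mulVec_eq_principalSub_of_support A _ hy]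
  simpa using hsub.dotProduct_mulVec_nonneg fun k : ({j}ᶜ : Finset ι) => y k

end Matrix

/-- if `A ∈ (FW^n_{n-1})^*` and some `(n-1) × (n-1)` principal submatrix
of `A` has rank at most `n - 3`, then `A` is psd. -/
theorem stmt6 (n : ℕ) (hn : 3 ≤ n) (A : Matrix (Fin n) (Fin n) ℝ)
    (hA : A ∈ FWdual n (n - 1))
    (I : Finset (Fin n)) (hI : I.card = n - 1)
    (hr : (principalSub A I).rank ≤ n - 3) :
    A.PosSemidef := by
  obtain ⟨hsymm, hpsd⟩ := hA
  have hcard : (principalSub A I).rank + Iᶜ.card < I.card := by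
    rw [Finset.card_compl, Fintype.card_fin, hI]
    omega
  obtain ⟨w, hw0, hAw⟩ := exists_mulVec_eq_zero_of_rank_principalSub_lt A I hcard
  obtain ⟨j, hj⟩ := Function.ne_iff.mp hw0
  refine posSemidef_of_mulVec_eq_zero_of_principalSub hsymm hAw hj (hpsd _ ?_)
  rw [Finset.card_compl, Finset.card_singleton, Fintype.card_fin]
end

section
/- Let A ∈ (FW^n_{n-1})* be a symmetric matrix that is not positive semidefinite. Then A spans an extreme ray of (FW^n_{n-1})* if and only if every (n-1)×(n-1) principal submatrix of A has rank exactly n−2. -/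
open Matrix


namespace Stmt7Aux

lemma rstar {m : Type*} [Fintype m] (x : m → ℝ) : star x = x := by
  funext i; exact star_trivial _

lemma herm_of_symm {m : Type*} [Fintype m] {M : Matrix m m ℝ} (h : M.IsSymm) :
    M.IsHermitian := by
  unfold Matrix.IsHermitian
  rw [Matrix.conjTranspose_eq_transpose_of_trivial]; exact h

lemma symm_of_herm {m : Type*} [Fintype m] {M : Matrix m m ℝ} (h : M.IsHermitian) :
    M.IsSymm := by
  unfold Matrix.IsHermitian at h
  rw [Matrix.conjTranspose_eq_transpose_of_trivial] at h; exact h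

lemma posSemidef_iff_forms {m : Type*} [Fintype m] (M : Matrix m m ℝ) :
    M.PosSemidef ↔ M.IsHermitian ∧ ∀ x : m → ℝ, 0 ≤ x ⬝ᵥ M *ᵥ x := by
  rw [Matrix.posSemidef_iff_dotProduct_mulVec]
  simp only [rstar]

lemma symm_dot {m : Type*} [Fintype m] {S : Matrix m m ℝ} (hS : Sᵀ = S) (x y : m → ℝ) :
    x ⬝ᵥ S *ᵥ y = y ⬝ᵥ S *ᵥ x := by
  rw [Matrix.dotProduct_mulVec, ← Matrix.mulVec_transpose, hS, dotProduct_comm]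

lemma form_shift {m : Type*} [Fintype m] {S : Matrix m m ℝ} (hS : Sᵀ = S) {w : m → ℝ}
    (hw : S *ᵥ w = 0) (x : m → ℝ) (c : ℝ) :
    (x - c • w) ⬝ᵥ S *ᵥ (x - c • w) = x ⬝ᵥ S *ᵥ x := by
  have h1 : S *ᵥ (x - c • w) = S *ᵥ x := by
    rw [Matrix.mulVec_sub, Matrix.mulVec_smul, hw, smul_zero, sub_zero]
  have h2 : w ⬝ᵥ S *ᵥ x = 0 := by
    rw [symm_dot hS w x, hw, dotProduct_zero]
  rw [h1, sub_dotProduct, smul_dotProduct, h2]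
  simp

lemma dot_self_nonneg {m : Type*} [Fintype m] (x : m → ℝ) : 0 ≤ x ⬝ᵥ x :=
  Finset.sum_nonneg fun i _ => mul_self_nonneg _

lemma dot_self_pos {m : Type*} [Fintype m] {x : m → ℝ} (hx : x ≠ 0) : 0 < x ⬝ᵥ x := by
  rcases (dot_self_nonneg x).lt_or_eq with h | h
  · exact h
  · exfalso
    apply hx
    funext i
    show x i = 0
    have h' := (Finset.sum_eq_zero_iff_of_nonneg (fun i _ => mul_self_nonneg (x i))).mp h.symm
    exact mul_self_eq_zero.mp (h' i (Finset.mem_univ i))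

lemma abs_form_le {m : Type*} [Fintype m] (C : Matrix m m ℝ) (v : m → ℝ) :
    |v ⬝ᵥ C *ᵥ v| ≤ (∑ i, ∑ j, |C i j|) * (v ⬝ᵥ v) := by
  have h1 : v ⬝ᵥ C *ᵥ v = ∑ i, ∑ j, v i * (C i j * v j) := by
    simp [dotProduct, Matrix.mulVec, Finset.mul_sum]
  have hv : ∀ k, v k * v k ≤ v ⬝ᵥ v := fun k =>
    Finset.single_le_sum (fun l _ => mul_self_nonneg (v l)) (Finset.mem_univ k)
  rw [h1, Finset.sum_mul]
  refine (Finset.abs_sum_le_sum_abs _ _).trans (Finset.sum_le_sum fun i _ => ?_)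
  rw [Finset.sum_mul]
  refine (Finset.abs_sum_le_sum_abs _ _).trans (Finset.sum_le_sum fun j _ => ?_)
  have hij : |v i * (C i j * v j)| = |C i j| * (|v i| * |v j|) := by
    rw [abs_mul, abs_mul]; ring
  rw [hij]
  have hvv : |v i| * |v j| ≤ v ⬝ᵥ v := by
    nlinarith [hv i, hv j, sq_abs (v i), sq_abs (v j), sq_nonneg (|v i| - |v j|),
      abs_nonneg (v i), abs_nonneg (v j)]
  exact mul_le_mul_of_nonneg_left hvv (abs_nonneg _)


lemma one_pert_aux {m : Type*} [Fintype m] [DecidableEq m] (C : Matrix m m ℝ)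
    (hC : C.IsHermitian) (t : ℝ) (ht : |t| * (∑ i, ∑ j, |C i j|) ≤ 1) :
    ((1 : Matrix m m ℝ) + t • C).PosSemidef := by
  rw [posSemidef_iff_forms]
  constructor
  · unfold Matrix.IsHermitian at hC ⊢
    rw [Matrix.conjTranspose_add, Matrix.conjTranspose_smul, Matrix.conjTranspose_one, hC,
      star_trivial]
  · intro x
    have h1 : x ⬝ᵥ ((1 : Matrix m m ℝ) + t • C) *ᵥ x = x ⬝ᵥ x + t * (x ⬝ᵥ C *ᵥ x) := by
      rw [Matrix.add_mulVec, dotProduct_add, Matrix.one_mulVec,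
        Matrix.smul_mulVec, dotProduct_smul, smul_eq_mul]
    rw [h1]
    have h2 := abs_form_le C x
    have h3 : |t * (x ⬝ᵥ C *ᵥ x)| ≤ |t| * ((∑ i, ∑ j, |C i j|) * (x ⬝ᵥ x)) := by
      rw [abs_mul]
      exact mul_le_mul_of_nonneg_left h2 (abs_nonneg t)
    have h4 : |t| * ((∑ i, ∑ j, |C i j|) * (x ⬝ᵥ x)) ≤ 1 * (x ⬝ᵥ x) := by
      rw [← mul_assoc]
      exact mul_le_mul_of_nonneg_right ht (dot_self_nonneg x)
    have h5 := neg_abs_le (t * (x ⬝ᵥ C *ᵥ x))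
    linarith

open scoped MatrixOrder in
lemma posdef_pert {m : Type*} [Fintype m] [DecidableEq m] {M N : Matrix m m ℝ}
    (hM : M.PosDef) (hN : N.IsHermitian) :
    ∃ ε : ℝ, 0 < ε ∧ (M + ε • N).PosSemidef ∧ (M - ε • N).PosSemidef := by
  have hMpsd := hM.posSemidef
  set R := CFC.sqrt M with hRdef
  have hR : R.PosSemidef := (CFC.sqrt_nonneg M).posSemidef
  have hRR : R * R = M := CFC.sqrt_mul_sqrt_self M hMpsd.nonneg
  have hdet : R.det ≠ 0 := by
    intro h
    have : M.det = 0 := by rw [← hRR, Matrix.det_mul, h, mul_zero]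
    exact (ne_of_gt hM.det_pos) this
  have hunit : IsUnit R.det := isUnit_iff_ne_zero.mpr hdet
  have hRi : R * R⁻¹ = 1 := Matrix.mul_nonsing_inv R hunit
  have hiR : R⁻¹ * R = 1 := Matrix.nonsing_inv_mul R hunit
  have hRsym : Rᴴ = R := hR.1
  have hRisym : (R⁻¹)ᴴ = R⁻¹ := by rw [Matrix.conjTranspose_nonsing_inv, hRsym]
  set C := R⁻¹ * N * R⁻¹ with hCdef
  have hC : C.IsHermitian := by
    unfold Matrix.IsHermitian
    rw [hCdef, Matrix.conjTranspose_mul, Matrix.conjTranspose_mul, hRisym, hN.eq]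
    rw [Matrix.mul_assoc]
  set K := ∑ i, ∑ j, |C i j| with hK
  have hK0 : 0 ≤ K := Finset.sum_nonneg fun i _ => Finset.sum_nonneg fun j _ => abs_nonneg _
  refine ⟨(K + 1)⁻¹, by positivity, ?_⟩
  have hbound : ∀ t : ℝ, |t| * K ≤ 1 → (M + t • N).PosSemidef := by
    intro t ht
    have hpsd1 : ((1 : Matrix m m ℝ) + t • C).PosSemidef := one_pert_aux C hC t ht
    have hkey : R * ((1 : Matrix m m ℝ) + t • C) * R = M + t • N := by
      have hRCR : R * C * R = N := by
        have e1 : R * C * R = (R * R⁻¹) * N * (R⁻¹ * R) := by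
          rw [hCdef]; noncomm_ring
        rw [e1, hRi, hiR, Matrix.one_mul, Matrix.mul_one]
      rw [Matrix.mul_add, Matrix.add_mul, Matrix.mul_one, hRR, Matrix.mul_smul,
        Matrix.smul_mul, hRCR]
    have := hpsd1.mul_mul_conjTranspose_same R
    rw [hRsym, hkey] at this
    exact this
  have habs : |(K + 1)⁻¹| * K ≤ 1 := by
    rw [abs_of_pos (by positivity)]
    rw [inv_mul_le_iff₀ (by positivity)]
    linarith
  have habs' : |-(K + 1)⁻¹| * K ≤ 1 := by rwa [abs_neg]
  refine ⟨hbound _ habs, ?_⟩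
  have := hbound _ habs'
  rwa [neg_smul, ← sub_eq_add_neg] at this

lemma vecMulVec_mulVec {m : Type*} [Fintype m] (u v x : m → ℝ) :
    Matrix.vecMulVec u v *ᵥ x = (v ⬝ᵥ x) • u := by
  funext i
  simp only [Matrix.mulVec, dotProduct, Matrix.vecMulVec_apply, Pi.smul_apply,
    smul_eq_mul]
  rw [Finset.sum_mul]
  congr 1 with j
  ring

lemma pert_psd {m : Type*} [Fintype m] [DecidableEq m] {M N : Matrix m m ℝ}
    (hM : M.PosSemidef) (hN : N.IsHermitian) (w : m → ℝ)
    (hMw : M *ᵥ w = 0) (hNw : N *ᵥ w = 0)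
    (hker : ∀ v, M *ᵥ v = 0 → ∃ c : ℝ, v = c • w) :
    ∃ ε : ℝ, 0 < ε ∧ (M + ε • N).PosSemidef ∧ (M - ε • N).PosSemidef := by
  have hMsym : Mᵀ = M := symm_of_herm hM.1
  have hNsym : Nᵀ = N := symm_of_herm hN
  rcases eq_or_ne w 0 with h0 | h0
  · apply posdef_pert _ hN
    refine Matrix.PosDef.of_dotProduct_mulVec_pos hM.1 (fun x hx => ?_)
    rcases (hM.dotProduct_mulVec_nonneg x).lt_or_eq with h | h
    · exact h
    · exfalso
      have hx0 := (hM.dotProduct_mulVec_zero_iff x).mp h.symm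
      obtain ⟨c, hc⟩ := hker x hx0
      exact hx (by rw [hc, h0, smul_zero])
  · set d := w ⬝ᵥ w with hd
    have hdpos : 0 < d := dot_self_pos h0
    set P := d⁻¹ • Matrix.vecMulVec w w with hP
    have hPmul : ∀ x : m → ℝ, P *ᵥ x = (d⁻¹ * (w ⬝ᵥ x)) • w := by
      intro x
      rw [hP, Matrix.smul_mulVec, vecMulVec_mulVec, smul_smul]
    have hPsym : Pᵀ = P := by
      rw [hP, Matrix.transpose_smul]
      congr 1
      ext i j
      simp [Matrix.vecMulVec_apply, mul_comm]
    have hPherm : P.IsHermitian := herm_of_symm hPsym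
    have hPform : ∀ x : m → ℝ, x ⬝ᵥ P *ᵥ x = d⁻¹ * (w ⬝ᵥ x) ^ 2 := by
      intro x
      rw [hPmul, dotProduct_smul, smul_eq_mul, dotProduct_comm x w]
      ring
    have hMP : (M + P).PosDef := by
      refine Matrix.PosDef.of_dotProduct_mulVec_pos ?_ ?_
      · exact hM.1.add hPherm
      · intro x hx
        rw [rstar]
        rw [Matrix.add_mulVec, dotProduct_add, hPform]
        rcases (hM.dotProduct_mulVec_nonneg x).lt_or_eq with h | h
        · rw [rstar] at h
          have : 0 ≤ d⁻¹ * (w ⬝ᵥ x) ^ 2 := by positivity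
          linarith
        · rw [rstar] at h
          have hx0 := (hM.dotProduct_mulVec_zero_iff x).mp (by rw [rstar]; exact h.symm)
          obtain ⟨c, hc⟩ := hker x hx0
          have hwx : w ⬝ᵥ x = c * d := by rw [hc, dotProduct_smul, smul_eq_mul]
          have hc0 : c ≠ 0 := by
            intro hcc
            exact hx (by rw [hc, hcc, zero_smul])
          have : 0 < d⁻¹ * (w ⬝ᵥ x) ^ 2 := by
            rw [hwx]
            have : c * d ≠ 0 := mul_ne_zero hc0 (ne_of_gt hdpos)
            positivity
          linarith
    obtain ⟨ε, hε, hp1, hp2⟩ := posdef_pert hMP hN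
    have main : ∀ T : Matrix m m ℝ, Tᵀ = T → T *ᵥ w = 0 → ((M + P) + T).PosSemidef →
        (M + T).PosSemidef := by
      intro T hTsym hTw hMPT
      have hSsym : (M + T)ᵀ = M + T := by rw [Matrix.transpose_add, hMsym, hTsym]
      refine (posSemidef_iff_forms _).mpr ⟨herm_of_symm hSsym, fun x => ?_⟩
      set c := d⁻¹ * (w ⬝ᵥ x) with hc
      set q := x - c • w with hq
      have hSw : (M + T) *ᵥ w = 0 := by
        rw [Matrix.add_mulVec, hMw, hTw, add_zero]
      have h1 : q ⬝ᵥ (M + T) *ᵥ q = x ⬝ᵥ (M + T) *ᵥ x := form_shift hSsym hSw x c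
      have hwq : w ⬝ᵥ q = 0 := by
        rw [hq, dotProduct_sub, dotProduct_smul, smul_eq_mul, hc, hd]
        field_simp
        rw [div_self (ne_of_gt (dot_self_pos h0)), sub_self, mul_zero]
      have hPq : P *ᵥ q = 0 := by
        rw [hPmul, hwq, mul_zero, zero_smul]
      have h2 : q ⬝ᵥ ((M + P) + T) *ᵥ q = q ⬝ᵥ (M + T) *ᵥ q := by
        rw [Matrix.add_mulVec, Matrix.add_mulVec, Matrix.add_mulVec, hPq, add_zero]
      have h3 := ((posSemidef_iff_forms _).mp hMPT).2 q
      rw [h2, h1] at h3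
      exact h3
    refine ⟨ε, hε, ?_, ?_⟩
    · apply main (ε • N)
      · rw [Matrix.transpose_smul, hNsym]
      · rw [Matrix.smul_mulVec, hNw, smul_zero]
      · exact hp1
    · have := main (-(ε • N)) ?_ ?_ ?_
      · rwa [← sub_eq_add_neg] at this
      · rw [Matrix.transpose_neg, Matrix.transpose_smul, hNsym]
      · rw [Matrix.neg_mulVec, Matrix.smul_mulVec, hNw, smul_zero, neg_zero]
      · rwa [← sub_eq_add_neg]


variable {n : ℕ}

/-- membership in the "hyperplane" cone -/
def Hyp (A : Matrix (Fin n) (Fin n) ℝ) : Prop :=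
  ∀ (i : Fin n) (w : Fin n → ℝ), w i = 0 → 0 ≤ w ⬝ᵥ A *ᵥ w

/-- the kernel-witness property at index `i` -/
def Wit (A : Matrix (Fin n) (Fin n) ℝ) (i : Fin n) : Prop :=
  ∃ w : Fin n → ℝ, w ≠ 0 ∧ w i = 0 ∧ ∀ j, j ≠ i → (A *ᵥ w) j = 0

/-- extension by zero -/
def ext0 (K : Finset (Fin n)) (v : ↥K → ℝ) : Fin n → ℝ :=
  fun j => if h : j ∈ K then v ⟨j, h⟩ else 0

lemma ext0_mem {K : Finset (Fin n)} (v : ↥K → ℝ) {j : Fin n} (h : j ∈ K) :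
    ext0 K v j = v ⟨j, h⟩ := dif_pos h

lemma ext0_coe {K : Finset (Fin n)} (v : ↥K → ℝ) (k : ↥K) :
    ext0 K v ↑k = v k := by
  rw [ext0_mem v k.2]

lemma ext0_nmem {K : Finset (Fin n)} (v : ↥K → ℝ) {j : Fin n} (h : j ∉ K) :
    ext0 K v j = 0 := dif_neg h

lemma ext0_eq_zero_iff {K : Finset (Fin n)} (v : ↥K → ℝ) :
    ext0 K v = 0 ↔ v = 0 := by
  constructor
  · intro h
    funext k
    have := congrFun h ↑k
    rw [ext0_coe] at this
    exact this
  · intro h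
    subst h
    funext j
    by_cases hj : j ∈ K
    · rw [ext0_mem _ hj]; rfl
    · rw [ext0_nmem _ hj]; rfl

lemma ext0_res {K : Finset (Fin n)} (w : Fin n → ℝ) (hw : ∀ j ∉ K, w j = 0) :
    ext0 K (fun k : ↥K => w ↑k) = w := by
  funext j
  by_cases hj : j ∈ K
  · rw [ext0_mem _ hj]
  · rw [ext0_nmem _ hj, hw j hj]

lemma sum_ext0 {K : Finset (Fin n)} (f : Fin n → ℝ) (hf : ∀ j ∉ K, f j = 0) :
    ∑ j, f j = ∑ k : ↥K, f ↑k := by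
  rw [Finset.sum_coe_sort K f]
  exact (Finset.sum_subset (Finset.subset_univ K) (fun x _ hx => hf x hx)).symm

lemma principalSub_mulVec (A : Matrix (Fin n) (Fin n) ℝ) (K : Finset (Fin n))
    (v : ↥K → ℝ) (k : ↥K) :
    (principalSub A K *ᵥ v) k = (A *ᵥ ext0 K v) ↑k := by
  simp only [Matrix.mulVec, dotProduct, principalSub, Matrix.submatrix_apply]
  have hz : ∀ j ∉ K, A ↑k j * ext0 K v j = 0 := fun j hj => by
    rw [ext0_nmem _ hj, mul_zero]
  rw [sum_ext0 _ hz]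
  congr 1 with k'
  rw [ext0_coe]

lemma principalSub_form (A : Matrix (Fin n) (Fin n) ℝ) (K : Finset (Fin n)) (v : ↥K → ℝ) :
    v ⬝ᵥ principalSub A K *ᵥ v = ext0 K v ⬝ᵥ A *ᵥ ext0 K v := by
  unfold dotProduct
  have hz : ∀ j ∉ K, ext0 K v j * (A *ᵥ ext0 K v) j = 0 := fun j hj => by
    rw [ext0_nmem _ hj, zero_mul]
  rw [sum_ext0 _ hz]
  congr 1 with k
  rw [principalSub_mulVec, ext0_coe]

lemma principalSub_symm {A : Matrix (Fin n) (Fin n) ℝ} (hA : A.IsSymm) (K : Finset (Fin n)) :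
    (principalSub A K).IsSymm := by
  unfold Matrix.IsSymm
  ext k k'
  simp only [Matrix.transpose_apply, principalSub, Matrix.submatrix_apply]
  conv_rhs => rw [← hA]
  rfl

lemma principalSub_posSemidef_iff {A : Matrix (Fin n) (Fin n) ℝ} (hA : A.IsSymm)
    (K : Finset (Fin n)) :
    (principalSub A K).PosSemidef ↔
      ∀ w : Fin n → ℝ, (∀ j ∉ K, w j = 0) → 0 ≤ w ⬝ᵥ A *ᵥ w := by
  rw [posSemidef_iff_forms]
  constructor
  · rintro ⟨-, hforms⟩ w hw
    have := hforms (fun k : ↥K => w ↑k)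
    rwa [principalSub_form, ext0_res w hw] at this
  · intro h
    refine ⟨herm_of_symm (principalSub_symm hA K), fun v => ?_⟩
    rw [principalSub_form]
    exact h _ (fun j hj => ext0_nmem v hj)

lemma card_compl_singleton (i : Fin n) : (({i}ᶜ : Finset (Fin n))).card = n - 1 := by
  rw [Finset.card_compl, Finset.card_singleton, Fintype.card_fin]

lemma exists_compl {K : Finset (Fin n)} (hn : 1 ≤ n) (hK : K.card = n - 1) :
    ∃ i : Fin n, ∀ j, j ∈ K ↔ j ≠ i := by
  have h1 : Kᶜ.card = 1 := by
    rw [Finset.card_compl, hK, Fintype.card_fin]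
    omega
  obtain ⟨i, hi⟩ := Finset.card_eq_one.mp h1
  refine ⟨i, fun j => ?_⟩
  constructor
  · intro hj hji
    have : j ∈ Kᶜ := by rw [hi, Finset.mem_singleton]; exact hji
    exact (Finset.mem_compl.mp this) hj
  · intro hj
    by_contra hjK
    have : j ∈ Kᶜ := Finset.mem_compl.mpr hjK
    rw [hi, Finset.mem_singleton] at this
    exact hj this

lemma mem_compl_singleton {i j : Fin n} : j ∈ ({i}ᶜ : Finset (Fin n)) ↔ j ≠ i := by
  rw [Finset.mem_compl, Finset.mem_singleton]

lemma mem_iff_hyp (hn : 3 ≤ n) (A : Matrix (Fin n) (Fin n) ℝ) :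
    A ∈ FWdual n (n - 1) ↔ A.IsSymm ∧ Hyp A := by
  constructor
  · rintro ⟨hsym, hpsd⟩
    refine ⟨hsym, fun i w hw => ?_⟩
    have hK := hpsd ({i}ᶜ) (card_compl_singleton i)
    rw [principalSub_posSemidef_iff hsym] at hK
    apply hK w
    intro j hj
    rw [mem_compl_singleton, not_ne_iff] at hj
    rw [hj, hw]
  · rintro ⟨hsym, hhyp⟩
    refine ⟨hsym, fun K hK => ?_⟩
    obtain ⟨i, hi⟩ := exists_compl (by omega) hK
    rw [principalSub_posSemidef_iff hsym]
    intro w hw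
    apply hhyp i w
    apply hw
    intro hiK
    exact (hi i).mp hiK rfl


lemma exists_neg {A : Matrix (Fin n) (Fin n) ℝ} (hsym : A.IsSymm) (h : ¬ A.PosSemidef) :
    ∃ v, v ⬝ᵥ A *ᵥ v < 0 := by
  by_contra h'
  push_neg at h'
  exact h ((posSemidef_iff_forms A).mpr ⟨herm_of_symm hsym, h'⟩)

lemma ker_triv {A : Matrix (Fin n) (Fin n) ℝ} (hsym : A.IsSymm) (hhyp : Hyp A)
    {v : Fin n → ℝ} (hv : v ⬝ᵥ A *ᵥ v < 0) {u : Fin n → ℝ} (hu : A *ᵥ u = 0) : u = 0 := by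
  by_contra h0
  obtain ⟨i, hi⟩ := Function.ne_iff.mp h0
  have hi : u i ≠ 0 := hi
  set q := v - (v i / u i) • u with hq
  have hqi : q i = 0 := by
    simp only [hq, Pi.sub_apply, Pi.smul_apply, smul_eq_mul]
    field_simp
    simp
  have h1 := hhyp i q hqi
  have h2 : q ⬝ᵥ A *ᵥ q = v ⬝ᵥ A *ᵥ v := form_shift hsym hu v (v i / u i)
  linarith

lemma iso {A : Matrix (Fin n) (Fin n) ℝ} (hA : A ∈ FWdual n (n - 1))
    (i : Fin n) (w : Fin n → ℝ) (hwi : w i = 0) (hw0 : w ⬝ᵥ A *ᵥ w = 0) :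
    ∀ j, j ≠ i → (A *ᵥ w) j = 0 := by
  set K : Finset (Fin n) := {i}ᶜ with hKdef
  have hpsd := hA.2 K (card_compl_singleton i)
  set v : ↥K → ℝ := fun k => w ↑k with hvdef
  have hext : ext0 K v = w := ext0_res w (fun j hj => by
    rw [hKdef, mem_compl_singleton, not_ne_iff] at hj
    rw [hj, hwi])
  have hform : v ⬝ᵥ principalSub A K *ᵥ v = 0 := by
    rw [principalSub_form, hext, hw0]
  have hker := (hpsd.dotProduct_mulVec_zero_iff v).mp (by rw [rstar]; exact hform)
  intro j hj
  have hjK : j ∈ K := mem_compl_singleton.mpr hj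
  have := congrFun hker (⟨j, hjK⟩ : ↥K)
  rw [principalSub_mulVec, hext] at this
  exact this

lemma wit_iso_val {A : Matrix (Fin n) (Fin n) ℝ} {i : Fin n} {w : Fin n → ℝ}
    (hwi : w i = 0) (hwj : ∀ j, j ≠ i → (A *ᵥ w) j = 0) : w ⬝ᵥ A *ᵥ w = 0 := by
  apply Finset.sum_eq_zero
  intro j _
  by_cases h : j = i
  · subst h; rw [hwi, zero_mul]
  · rw [hwj j h, mul_zero]

lemma wit_c_ne {A : Matrix (Fin n) (Fin n) ℝ} (hsym : A.IsSymm) (hhyp : Hyp A)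
    {v : Fin n → ℝ} (hv : v ⬝ᵥ A *ᵥ v < 0) {i : Fin n} {w : Fin n → ℝ} (hw : w ≠ 0)
    (hwj : ∀ j, j ≠ i → (A *ᵥ w) j = 0) : (A *ᵥ w) i ≠ 0 := by
  intro hc
  apply hw
  apply ker_triv hsym hhyp hv
  funext j
  by_cases h : j = i
  · subst h; exact hc
  · exact hwj j h

lemma wit_support {A : Matrix (Fin n) (Fin n) ℝ} (hA : A ∈ FWdual n (n - 1))
    (hsym : A.IsSymm) (hhyp : Hyp A) {v : Fin n → ℝ} (hv : v ⬝ᵥ A *ᵥ v < 0)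
    {i : Fin n} {w : Fin n → ℝ} (hw : w ≠ 0) (hwi : w i = 0)
    (hwj : ∀ j, j ≠ i → (A *ᵥ w) j = 0) : ∀ j, j ≠ i → w j ≠ 0 := by
  intro j hj hzero
  have h0 : w ⬝ᵥ A *ᵥ w = 0 := wit_iso_val hwi hwj
  have := iso hA j w hzero h0 i (Ne.symm hj)
  exact wit_c_ne hsym hhyp hv hw hwj this

lemma wit_prop {A : Matrix (Fin n) (Fin n) ℝ} (hsym : A.IsSymm) (hhyp : Hyp A)
    {v : Fin n → ℝ} (hv : v ⬝ᵥ A *ᵥ v < 0) {i : Fin n} {w w' : Fin n → ℝ}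
    (hwj : ∀ j, j ≠ i → (A *ᵥ w) j = 0) (hw'j : ∀ j, j ≠ i → (A *ᵥ w') j = 0)
    (hc : (A *ᵥ w) i ≠ 0) :
    w' = ((A *ᵥ w') i / (A *ᵥ w) i) • w := by
  set c := (A *ᵥ w) i with hcdef
  set c' := (A *ᵥ w') i with hc'def
  have hker : A *ᵥ (w' - (c' / c) • w) = 0 := by
    rw [Matrix.mulVec_sub, Matrix.mulVec_smul]
    funext j
    simp only [Pi.sub_apply, Pi.smul_apply, smul_eq_mul]
    by_cases h : j = i
    · subst h
      rw [← hcdef, ← hc'def]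
      field_simp
      simp
    · rw [hwj j h, hw'j j h, mul_zero, sub_zero]
      rfl
  have := ker_triv hsym hhyp hv hker
  have := sub_eq_zero.mp this
  exact this

lemma form_basis (A : Matrix (Fin n) (Fin n) ℝ) (j k : Fin n) :
    Pi.single j (1 : ℝ) ⬝ᵥ A *ᵥ Pi.single k (1 : ℝ) = A j k := by
  simp [dotProduct, Matrix.mulVec, Pi.single_apply]

lemma exists_third (hn : 3 ≤ n) (j k : Fin n) : ∃ i : Fin n, i ≠ j ∧ i ≠ k := by
  by_contra h
  push_neg at h
  have hsub : (Finset.univ : Finset (Fin n)) ⊆ {j, k} := by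
    intro i _
    rcases eq_or_ne i j with h1 | h1
    · simp [h1]
    · simp [h i h1]
  have := Finset.card_le_card hsub
  rw [Finset.card_univ, Fintype.card_fin] at this
  have : ({j, k} : Finset (Fin n)).card ≤ 2 :=
    (Finset.card_insert_le _ _).trans (by rw [Finset.card_singleton])
  omega

lemma forms_zero_eq_zero (hn : 3 ≤ n) {A : Matrix (Fin n) (Fin n) ℝ} (hsym : A.IsSymm)
    (h : ∀ (i : Fin n) (w : Fin n → ℝ), w i = 0 → w ⬝ᵥ A *ᵥ w = 0) : A = 0 := by
  have hdiag : ∀ j : Fin n, A j j = 0 := by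
    intro j
    obtain ⟨i, hij, -⟩ := exists_third hn j j
    have := h i (Pi.single j 1) (by rw [Pi.single_eq_of_ne hij])
    rwa [form_basis] at this
  ext j k
  show A j k = 0
  rcases eq_or_ne j k with rfl | hjk
  · exact hdiag j
  obtain ⟨i, hij, hik⟩ := exists_third hn j k
  have hu : (Pi.single j 1 + Pi.single k 1 : Fin n → ℝ) i = 0 := by
    simp [Pi.single_eq_of_ne hij, Pi.single_eq_of_ne hik]
  have hform := h i _ hu
  rw [add_dotProduct, Matrix.mulVec_add, dotProduct_add,
    dotProduct_add, form_basis, form_basis, form_basis, form_basis] at hform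
  have hsymjk : A k j = A j k := (congrFun (congrFun hsym k) j).symm
  rw [hdiag j, hdiag k, hsymjk] at hform
  linarith


lemma dot_single {u g : Fin n → ℝ} {i : Fin n} (h : ∀ j, j ≠ i → g j = 0) :
    u ⬝ᵥ g = u i * g i := by
  unfold dotProduct
  rw [Finset.sum_eq_single i (fun b _ hb => by rw [h b hb, mul_zero])
    (fun h' => absurd (Finset.mem_univ i) h')]

lemma backward (hn : 3 ≤ n) {A : Matrix (Fin n) (Fin n) ℝ} (hA : A ∈ FWdual n (n - 1))
    (hnpsd : ¬ A.PosSemidef) (hwit : ∀ i, Wit A i) :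
    SpansExtremeRay (FWdual n (n - 1)) A := by
  obtain ⟨hsym, hhyp⟩ := (mem_iff_hyp hn A).mp hA
  obtain ⟨v, hv⟩ := exists_neg hsym hnpsd
  refine ⟨hA, ?_, ?_⟩
  · intro h
    rw [h] at hnpsd
    exact hnpsd .zero
  · intro X Y hX hY hsum
    obtain ⟨hXsym, hXhyp⟩ := (mem_iff_hyp hn X).mp hX
    obtain ⟨hYsym, hYhyp⟩ := (mem_iff_hyp hn Y).mp hY
    choose w hw0 hwi hwj using hwit
    have hc : ∀ i, (A *ᵥ w i) i ≠ 0 := fun i => wit_c_ne hsym hhyp hv (hw0 i) (hwj i)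
    have hXiso : ∀ i, ∀ j, j ≠ i → (X *ᵥ w i) j = 0 := by
      intro i
      have hAval : w i ⬝ᵥ A *ᵥ w i = 0 := wit_iso_val (hwi i) (hwj i)
      have hXval : w i ⬝ᵥ X *ᵥ w i = 0 := by
        have hsplit : w i ⬝ᵥ A *ᵥ w i = w i ⬝ᵥ X *ᵥ w i + w i ⬝ᵥ Y *ᵥ w i := by
          rw [hsum, Matrix.add_mulVec, dotProduct_add]
        have h1 := hXhyp i (w i) (hwi i)
        have h2 := hYhyp i (w i) (hwi i)
        linarith
      exact iso hX i (w i) (hwi i) hXval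
    have hn0 : 0 < n := by omega
    set i0 : Fin n := ⟨0, hn0⟩ with hi0
    set a : ℝ := (X *ᵥ w i0) i0 / (A *ᵥ w i0) i0 with ha
    set Z : Matrix (Fin n) (Fin n) ℝ := X - a • A with hZ
    have hZsym : Zᵀ = Z := by
      rw [hZ, Matrix.transpose_sub, Matrix.transpose_smul, hXsym, hsym]
    have hZapp : ∀ i j, (Z *ᵥ w i) j = (X *ᵥ w i) j - a * (A *ᵥ w i) j := by
      intro i j
      rw [hZ, Matrix.sub_mulVec, Matrix.smul_mulVec]
      simp
    have hZj : ∀ i, ∀ j, j ≠ i → (Z *ᵥ w i) j = 0 := by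
      intro i j hj
      rw [hZapp, hXiso i j hj, hwj i j hj, mul_zero, sub_zero]
    have ht0 : (Z *ᵥ w i0) i0 = 0 := by
      rw [hZapp, ha, div_mul_cancel₀ _ (hc i0), sub_self]
    have ht : ∀ i, (Z *ᵥ w i) i = 0 := by
      intro i
      rcases eq_or_ne i i0 with rfl | hne
      · exact ht0
      have hfull : w i0 i ≠ 0 := wit_support hA hsym hhyp hv (hw0 i0) (hwi i0) (hwj i0) i hne
      have hdot1 : w i0 ⬝ᵥ Z *ᵥ w i = w i0 i * (Z *ᵥ w i) i := dot_single (hZj i)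
      have hdot2 : w i ⬝ᵥ Z *ᵥ w i0 = w i i0 * (Z *ᵥ w i0) i0 := dot_single (hZj i0)
      have hsd := symm_dot hZsym (w i0) (w i)
      rw [hdot1, hdot2, ht0, mul_zero] at hsd
      rcases mul_eq_zero.mp hsd with h | h
      · exact absurd h hfull
      · exact h
    have hZw : ∀ i, Z *ᵥ w i = 0 := by
      intro i
      funext j
      rcases eq_or_ne j i with rfl | hj
      · exact ht j
      · exact hZj i j hj
    set W : Matrix (Fin n) (Fin n) ℝ := Matrix.of (fun p q => w q p) with hW
    have hmulW : ∀ (T : Matrix (Fin n) (Fin n) ℝ) p q, (T * W) p q = (T *ᵥ w q) p := by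
      intro T p q
      simp [Matrix.mul_apply, Matrix.mulVec, dotProduct, hW]
    have hZW : Z * W = 0 := by
      ext p q
      rw [hmulW, hZw]
      rfl
    have hAW : A * W = Matrix.diagonal (fun q => (A *ᵥ w q) q) := by
      ext p q
      rw [hmulW]
      rcases eq_or_ne p q with rfl | hpq
      · rw [Matrix.diagonal_apply_eq]
      · rw [Matrix.diagonal_apply_ne _ hpq, hwj q p hpq]
    have hdetW : IsUnit W.det := by
      apply isUnit_iff_ne_zero.mpr
      intro h
      have hdm : A.det * W.det = ∏ q, (A *ᵥ w q) q := by
        rw [← Matrix.det_mul, hAW, Matrix.det_diagonal]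
      have hprod : ∏ q, (A *ᵥ w q) q ≠ 0 :=
        Finset.prod_ne_zero_iff.mpr (fun q _ => hc q)
      exact hprod (by rw [← hdm, h, mul_zero])
    have hZ0 : Z = 0 := by
      have h1 : Z * W * W⁻¹ = 0 * W⁻¹ := by rw [hZW]
      rwa [Matrix.mul_nonsing_inv_cancel_right W Z hdetW, Matrix.zero_mul] at h1
    have hXa : X = a • A := by
      have := sub_eq_zero.mp hZ0
      exact this
    have hYb : Y = (1 - a) • A := by
      have h1 : Y = A - X := by rw [hsum]; abel
      rw [h1, hXa, sub_smul, one_smul]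
    have hAne : ¬ ∀ (i : Fin n) (w' : Fin n → ℝ), w' i = 0 → w' ⬝ᵥ A *ᵥ w' = 0 := by
      intro hall
      rw [forms_zero_eq_zero hn hsym hall] at hnpsd
      exact hnpsd .zero
    have key : ∀ b : ℝ, b < 0 → ¬ (∀ (i : Fin n) (w' : Fin n → ℝ), w' i = 0 →
        0 ≤ w' ⬝ᵥ (b • A) *ᵥ w') := by
      intro b hb hbhyp
      apply hAne
      intro i w' hw'
      have h1 := hhyp i w' hw'
      have h2 := hbhyp i w' hw'
      rw [Matrix.smul_mulVec, dotProduct_smul, smul_eq_mul] at h2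
      nlinarith
    have ha0 : 0 ≤ a := by
      by_contra hlt
      push_neg at hlt
      apply key a hlt
      intro i w' hw'
      rw [← hXa]
      exact hXhyp i w' hw'
    have hb0 : 0 ≤ 1 - a := by
      by_contra hlt
      push_neg at hlt
      apply key (1 - a) hlt
      intro i w' hw'
      rw [← hYb]
      exact hYhyp i w' hw'
    exact ⟨a, 1 - a, ha0, hb0, hXa, hYb⟩


lemma smul_mem (hn : 3 ≤ n) {A : Matrix (Fin n) (Fin n) ℝ} (hA : A ∈ FWdual n (n - 1))
    {c : ℝ} (hc : 0 ≤ c) : c • A ∈ FWdual n (n - 1) := by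
  rw [mem_iff_hyp hn] at hA ⊢
  refine ⟨?_, fun i x hx => ?_⟩
  · unfold Matrix.IsSymm
    rw [Matrix.transpose_smul, hA.1]
  · rw [Matrix.smul_mulVec, dotProduct_smul, smul_eq_mul]
    exact mul_nonneg hc (hA.2 i x hx)

lemma forward (hn : 3 ≤ n) {A : Matrix (Fin n) (Fin n) ℝ} (hA : A ∈ FWdual n (n - 1))
    (hnpsd : ¬ A.PosSemidef) (hex : SpansExtremeRay (FWdual n (n - 1)) A) :
    ∀ i, Wit A i := by
  obtain ⟨hsym, hhyp⟩ := (mem_iff_hyp hn A).mp hA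
  obtain ⟨v, hv⟩ := exists_neg hsym hnpsd
  intro i0
  by_contra hwit0
  have hwd : ∀ j, ∃ wj : Fin n → ℝ,
      (Wit A j → (wj ≠ 0 ∧ wj j = 0 ∧ ∀ k, k ≠ j → (A *ᵥ wj) k = 0)) ∧
      (¬ Wit A j → wj = 0) := by
    intro j
    by_cases h : Wit A j
    · obtain ⟨wj, h1, h2, h3⟩ := h
      exact ⟨wj, fun _ => ⟨h1, h2, h3⟩, fun h' => absurd ⟨wj, h1, h2, h3⟩ h'⟩
    · exact ⟨0, fun h' => absurd h' h, fun _ => rfl⟩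
  choose w hw1 hw2 using hwd
  have hwi0 : w i0 = 0 := hw2 i0 hwit0
  set W : Matrix (Fin n) (Fin n) ℝ := Matrix.of (fun p q => w p q) with hW
  have hdet : W.det = 0 := by
    apply Matrix.det_eq_zero_of_row_eq_zero i0
    intro k
    show w i0 k = 0
    rw [hwi0]
    rfl
  obtain ⟨u, hu0, huW⟩ := Matrix.exists_mulVec_eq_zero_iff.mpr hdet
  have hdotu : ∀ p, w p ⬝ᵥ u = 0 := by
    intro p
    have h := congrFun huW p
    simpa [Matrix.mulVec, dotProduct, hW] using h
  set B : Matrix (Fin n) (Fin n) ℝ := Matrix.vecMulVec u u with hB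
  have hBsym : B.IsSymm := by
    unfold Matrix.IsSymm
    ext p q
    simp [hB, Matrix.vecMulVec_apply, mul_comm]
  have hBw : ∀ p, B *ᵥ w p = 0 := by
    intro p
    rw [hB, vecMulVec_mulVec, dotProduct_comm, hdotu, zero_smul]
  -- per-index epsilon
  have hper : ∀ i : Fin n, ∃ ε : ℝ, 0 < ε ∧ ∀ (x : Fin n → ℝ), x i = 0 →
      (0 ≤ x ⬝ᵥ A *ᵥ x + ε * (x ⬝ᵥ B *ᵥ x) ∧ 0 ≤ x ⬝ᵥ A *ᵥ x - ε * (x ⬝ᵥ B *ᵥ x)) := by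
    intro i
    set K : Finset (Fin n) := {i}ᶜ with hK
    set M := principalSub A K with hM
    set N := principalSub B K with hN
    have hMpsd : M.PosSemidef := hA.2 K (card_compl_singleton i)
    have hNherm : N.IsHermitian := herm_of_symm (principalSub_symm hBsym K)
    have hsupp : ∀ j ∉ K, w i j = 0 := by
      intro j hj
      rw [hK, mem_compl_singleton, not_ne_iff] at hj
      subst hj
      by_cases hwit : Wit A j
      · exact (hw1 j hwit).2.1
      · rw [hw2 j hwit]; rfl
    set wv : ↥K → ℝ := fun k => w i ↑k with hwv
    have hext : ext0 K wv = w i := ext0_res (w i) hsupp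
    have hAw : ∀ j, j ≠ i → (A *ᵥ w i) j = 0 := by
      intro j hj
      by_cases hwit : Wit A i
      · exact (hw1 i hwit).2.2 j hj
      · rw [hw2 i hwit, Matrix.mulVec_zero]; rfl
    have hMw : M *ᵥ wv = 0 := by
      funext k
      rw [hM, principalSub_mulVec, hext]
      show (A *ᵥ w i) ↑k = 0
      exact hAw ↑k (mem_compl_singleton.mp k.2)
    have hNw : N *ᵥ wv = 0 := by
      funext k
      rw [hN, principalSub_mulVec, hext]
      show (B *ᵥ w i) ↑k = 0
      rw [hBw i]
      rfl
    have hker : ∀ vv : ↥K → ℝ, M *ᵥ vv = 0 → ∃ c : ℝ, vv = c • wv := by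
      intro vv hvv
      set w' := ext0 K vv with hw'
      have hw'i : w' i = 0 := ext0_nmem vv (by rw [hK, mem_compl_singleton, not_ne_iff])
      have hw'j : ∀ j, j ≠ i → (A *ᵥ w') j = 0 := by
        intro j hj
        have hjK : j ∈ K := by rw [hK, mem_compl_singleton]; exact hj
        have := congrFun hvv (⟨j, hjK⟩ : ↥K)
        rw [hM, principalSub_mulVec] at this
        exact this
      rcases eq_or_ne w' 0 with h0 | h0
      · refine ⟨0, ?_⟩
        rw [zero_smul]
        exact (ext0_eq_zero_iff vv).mp h0
      · have hwitA : Wit A i := ⟨w', h0, hw'i, hw'j⟩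
        obtain ⟨hne, hii, hjj⟩ := hw1 i hwitA
        have hcne : (A *ᵥ w i) i ≠ 0 := wit_c_ne hsym hhyp hv hne hjj
        have hprop := wit_prop hsym hhyp hv hjj hw'j hcne
        refine ⟨(A *ᵥ w') i / (A *ᵥ w i) i, ?_⟩
        funext k
        have hk := congrFun hprop ↑k
        rw [hw'] at hk
        rw [ext0_coe] at hk
        exact hk
    obtain ⟨ε, hε, hp, hm⟩ := pert_psd hMpsd hNherm wv hMw hNw hker
    refine ⟨ε, hε, fun x hx => ?_⟩
    have hxsupp : ∀ j ∉ K, x j = 0 := by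
      intro j hj
      rw [hK, mem_compl_singleton, not_ne_iff] at hj
      rw [hj, hx]
    set xv : ↥K → ℝ := fun k => x ↑k with hxv
    have hxe : ext0 K xv = x := ext0_res x hxsupp
    have e1 : xv ⬝ᵥ M *ᵥ xv = x ⬝ᵥ A *ᵥ x := by rw [hM, principalSub_form, hxe]
    have e2 : xv ⬝ᵥ N *ᵥ xv = x ⬝ᵥ B *ᵥ x := by rw [hN, principalSub_form, hxe]
    have f1 := ((posSemidef_iff_forms _).mp hp).2 xv
    have f2 := ((posSemidef_iff_forms _).mp hm).2 xv
    have g1 : xv ⬝ᵥ (M + ε • N) *ᵥ xv = xv ⬝ᵥ M *ᵥ xv + ε * (xv ⬝ᵥ N *ᵥ xv) := by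
      rw [Matrix.add_mulVec, dotProduct_add, Matrix.smul_mulVec,
        dotProduct_smul, smul_eq_mul]
    have g2 : xv ⬝ᵥ (M - ε • N) *ᵥ xv = xv ⬝ᵥ M *ᵥ xv - ε * (xv ⬝ᵥ N *ᵥ xv) := by
      rw [Matrix.sub_mulVec, dotProduct_sub, Matrix.smul_mulVec,
        dotProduct_smul, smul_eq_mul]
    rw [g1, e1, e2] at f1
    rw [g2, e1, e2] at f2
    exact ⟨f1, f2⟩
  choose εf hεf hforms using hper
  have hne : (Finset.univ : Finset (Fin n)).Nonempty := ⟨i0, Finset.mem_univ _⟩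
  set ε := Finset.univ.inf' hne εf with hεdef
  have hεpos : 0 < ε := (Finset.lt_inf'_iff hne).mpr (fun i _ => hεf i)
  have hεle : ∀ i, ε ≤ εf i := fun i => Finset.inf'_le εf (Finset.mem_univ i)
  have hmem : ∀ t : ℝ, |t| ≤ ε → A + t • B ∈ FWdual n (n - 1) := by
    intro t ht
    rw [mem_iff_hyp hn]
    refine ⟨?_, fun i x hx => ?_⟩
    · unfold Matrix.IsSymm
      rw [Matrix.transpose_add, Matrix.transpose_smul, hsym, hBsym]
    · have h1 := (hforms i x hx).1
      have h2 := (hforms i x hx).2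
      have hform : x ⬝ᵥ (A + t • B) *ᵥ x = x ⬝ᵥ A *ᵥ x + t * (x ⬝ᵥ B *ᵥ x) := by
        rw [Matrix.add_mulVec, dotProduct_add, Matrix.smul_mulVec,
          dotProduct_smul, smul_eq_mul]
      rw [hform]
      obtain ⟨hta, htb⟩ := abs_le.mp ht
      have hεi := hεle i
      rcases le_total 0 (x ⬝ᵥ B *ᵥ x) with hb | hb
      · nlinarith [mul_nonneg (by linarith : (0:ℝ) ≤ t + εf i) hb]
      · nlinarith [mul_nonneg (by linarith : (0:ℝ) ≤ εf i - t) (by linarith : (0:ℝ) ≤ -(x ⬝ᵥ B *ᵥ x))]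
  set X := (2⁻¹ : ℝ) • (A + ε • B) with hXdef
  set Y := (2⁻¹ : ℝ) • (A - ε • B) with hYdef
  have habs : |ε| ≤ ε := by rw [abs_of_pos hεpos]
  have hmemX : X ∈ FWdual n (n - 1) := smul_mem hn (hmem ε habs) (by norm_num)
  have hmemY : Y ∈ FWdual n (n - 1) := by
    have : A - ε • B = A + (-ε) • B := by rw [neg_smul, ← sub_eq_add_neg]
    rw [hYdef, this]
    exact smul_mem hn (hmem (-ε) (by rwa [abs_neg])) (by norm_num)
  have hXY : A = X + Y := by
    rw [hXdef, hYdef, ← smul_add]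
    have h2 : (A + ε • B) + (A - ε • B) = (2 : ℝ) • A := by
      rw [two_smul]
      abel
    rw [h2, smul_smul]
    norm_num
  obtain ⟨a, b, ha, hb, hXa, hYb⟩ := hex.2.2 X Y hmemX hmemY hXY
  have hBA : ε • B = (2 * a - 1) • A := by
    have h1 : (2 : ℝ) • ((2⁻¹ : ℝ) • (A + ε • B)) = (2 : ℝ) • (a • A) := by
      rw [← hXdef, hXa]
    rw [smul_smul, smul_smul] at h1
    norm_num at h1
    have h2 : ε • B = (2 * a) • A - A := by
      rw [← h1]
      abel
    rw [h2, sub_smul, one_smul]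
  have hBuu : u ⬝ᵥ B *ᵥ u = (u ⬝ᵥ u) ^ 2 := by
    rw [hB, vecMulVec_mulVec, dotProduct_smul, smul_eq_mul]
    ring
  have hupos : 0 < u ⬝ᵥ B *ᵥ u := by
    rw [hBuu]
    exact pow_pos (dot_self_pos hu0) 2
  have h2a : 2 * a - 1 ≠ 0 := by
    intro h
    rw [h, zero_smul] at hBA
    have hform := congrArg (fun (M : Matrix (Fin n) (Fin n) ℝ) => u ⬝ᵥ M *ᵥ u) hBA
    simp only [Matrix.smul_mulVec, dotProduct_smul, smul_eq_mul] at hform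
    rw [Matrix.zero_mulVec, dotProduct_zero] at hform
    nlinarith
  set γ : ℝ := ε / (2 * a - 1) with hγ
  have hAB : A = γ • B := by
    have h1 := congrArg (fun (M : Matrix (Fin n) (Fin n) ℝ) => (2 * a - 1)⁻¹ • M) hBA
    simp only [smul_smul] at h1
    rw [inv_mul_cancel₀ h2a, one_smul] at h1
    rw [← h1, hγ, div_eq_inv_mul]
  have hformA : ∀ x, x ⬝ᵥ A *ᵥ x = γ * (u ⬝ᵥ x) ^ 2 := by
    intro x
    rw [hAB, Matrix.smul_mulVec, dotProduct_smul, smul_eq_mul, hB,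
      vecMulVec_mulVec, dotProduct_smul, smul_eq_mul, dotProduct_comm x u]
    ring
  rcases le_or_gt 0 γ with hγ0 | hγ0
  · apply hnpsd
    refine (posSemidef_iff_forms A).mpr ⟨herm_of_symm hsym, fun x => ?_⟩
    rw [hformA]
    positivity
  · apply hnpsd
    have hzero : A = 0 := by
      apply forms_zero_eq_zero hn hsym
      intro i x hx
      refine le_antisymm ?_ (hhyp i x hx)
      rw [hformA]
      have : 0 ≤ (u ⬝ᵥ x) ^ 2 := sq_nonneg _
      nlinarith
    rw [hzero]
    exact .zero


lemma rank_iff_wit (hn : 3 ≤ n) {A : Matrix (Fin n) (Fin n) ℝ} (hA : A ∈ FWdual n (n - 1))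
    (hnpsd : ¬ A.PosSemidef) (i : Fin n) :
    (principalSub A ({i}ᶜ : Finset (Fin n))).rank = n - 2 ↔ Wit A i := by
  obtain ⟨hsym, hhyp⟩ := (mem_iff_hyp hn A).mp hA
  obtain ⟨v, hv⟩ := exists_neg hsym hnpsd
  set K : Finset (Fin n) := {i}ᶜ with hK
  set M := principalSub A K with hM
  have hcard : Fintype.card ↥K = n - 1 := by
    rw [Fintype.card_coe, hK, card_compl_singleton]
  have hrn : M.rank + Module.finrank ℝ (LinearMap.ker M.mulVecLin) = n - 1 := by
    have h := LinearMap.finrank_range_add_finrank_ker M.mulVecLin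
    rw [Module.finrank_fintype_fun_eq_card, hcard] at h
    rw [Matrix.rank]
    exact h
  have hker_iff : ∀ vv : ↥K → ℝ, vv ∈ LinearMap.ker M.mulVecLin ↔ M *ᵥ vv = 0 := fun vv => by
    rw [LinearMap.mem_ker, Matrix.mulVecLin_apply]
  have hext_j : ∀ (z : ↥K → ℝ), M *ᵥ z = 0 → ∀ j, j ≠ i → (A *ᵥ ext0 K z) j = 0 := by
    intro z hz j hj
    have hjK : j ∈ K := by rw [hK]; exact mem_compl_singleton.mpr hj
    have h := congrFun hz (⟨j, hjK⟩ : ↥K)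
    rw [hM, principalSub_mulVec] at h
    exact h
  have h1 : Wit A i ↔ ∃ vv : ↥K → ℝ, vv ≠ 0 ∧ M *ᵥ vv = 0 := by
    constructor
    · rintro ⟨w', hw0, hwi, hwj⟩
      have hres : ext0 K (fun k : ↥K => w' ↑k) = w' := ext0_res w' (fun j hj => by
        rw [hK, mem_compl_singleton, not_ne_iff] at hj
        rw [hj, hwi])
      refine ⟨fun k => w' ↑k, ?_, ?_⟩
      · intro h
        apply hw0
        rw [← hres, h]
        exact (ext0_eq_zero_iff 0).mpr rfl
      · funext k
        rw [hM, principalSub_mulVec, hres]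
        exact hwj ↑k (mem_compl_singleton.mp (by rw [← hK]; exact k.2))
    · rintro ⟨vv, hvv0, hvvk⟩
      refine ⟨ext0 K vv, fun h => hvv0 ((ext0_eq_zero_iff vv).mp h),
        ext0_nmem vv (by rw [hK, mem_compl_singleton, not_ne_iff]), hext_j vv hvvk⟩
  constructor
  · intro hrank
    have hkd : Module.finrank ℝ (LinearMap.ker M.mulVecLin) = 1 := by omega
    have hne : LinearMap.ker M.mulVecLin ≠ ⊥ := by
      intro h
      rw [h, finrank_bot] at hkd
      exact absurd hkd (by norm_num)
    obtain ⟨vv, hvvmem, hvv0⟩ := (Submodule.ne_bot_iff _).mp hne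
    exact h1.mpr ⟨vv, hvv0, (hker_iff vv).mp hvvmem⟩
  · intro hwit
    obtain ⟨vv, hvv0, hvvk⟩ := h1.mp hwit
    have hw0j := hext_j vv hvvk
    have hw0ne : ext0 K vv ≠ 0 := fun h => hvv0 ((ext0_eq_zero_iff vv).mp h)
    have hc0 : (A *ᵥ ext0 K vv) i ≠ 0 := wit_c_ne hsym hhyp hv hw0ne hw0j
    have hsp : LinearMap.ker M.mulVecLin = Submodule.span ℝ {vv} := by
      apply le_antisymm
      · intro vv' hvv'
        rw [hker_iff] at hvv'
        have hw'j := hext_j vv' hvv'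
        have hprop := wit_prop hsym hhyp hv hw0j hw'j hc0
        apply Submodule.mem_span_singleton.mpr
        refine ⟨(A *ᵥ ext0 K vv') i / (A *ᵥ ext0 K vv) i, ?_⟩
        funext k
        have hk := congrFun hprop ↑k
        rw [ext0_coe] at hk
        rw [Pi.smul_apply, smul_eq_mul, ext0_coe] at hk
        rw [Pi.smul_apply, smul_eq_mul]
        exact hk.symm
      · rw [Submodule.span_le, Set.singleton_subset_iff]
        exact (hker_iff vv).mpr hvvk
    have hkd : Module.finrank ℝ (LinearMap.ker M.mulVecLin) = 1 := by
      rw [hsp]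
      exact finrank_span_singleton hvv0
    omega

end Stmt7Aux

/-- a non-psd `A ∈ (FW^n_{n-1})^*` spans an extreme ray of
`(FW^n_{n-1})^*` iff every `(n-1) × (n-1)` principal submatrix of `A` has rank
exactly `n - 2`. -/
theorem stmt7 (n : ℕ) (hn : 3 ≤ n) (A : Matrix (Fin n) (Fin n) ℝ)
    (hA : A ∈ FWdual n (n - 1)) (hnpsd : ¬ A.PosSemidef) :
    SpansExtremeRay (FWdual n (n - 1)) A ↔
      ∀ K : Finset (Fin n), K.card = n - 1 → (principalSub A K).rank = n - 2 := by
  constructor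
  · intro hex K hK
    obtain ⟨i, hi⟩ := Stmt7Aux.exists_compl (by omega) hK
    have hKeq : K = ({i}ᶜ : Finset (Fin n)) := by
      ext j
      rw [hi j, Stmt7Aux.mem_compl_singleton]
    rw [hKeq]
    exact (Stmt7Aux.rank_iff_wit hn hA hnpsd i).mpr (Stmt7Aux.forward hn hA hnpsd hex i)
  · intro hrank
    apply Stmt7Aux.backward hn hA hnpsd
    intro i
    exact (Stmt7Aux.rank_iff_wit hn hA hnpsd i).mp
      (hrank ({i}ᶜ) (Stmt7Aux.card_compl_singleton i))
end

section
/- If Q is an invertible matrix that is either a permutation matrix or a diagonal matrix with positive diagonal entries, then the map X ↦ QᵀXQ is a linear automorphism of the cone (FW^n_k)*; in particular it maps extreme rays to extreme rays. -/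
open Matrix

/-!
A permutation matrix `P_σ` acts by reindexing, `P_σᵀ X P_σ = X.submatrix σ⁻¹ σ⁻¹`, so it
carries the principal submatrix on `K` to a reindexed copy of the one on `σ⁻¹ K`; a
diagonal `D` carries it to `D_K X_K D_K`. Both operations preserve positive
semidefiniteness, and the inverse of such a `Q` is of the same kind, so `X ↦ Qᵀ X Q` is a
linear automorphism of `(FW^n_k)*`, and linear automorphisms of a cone permute its
extreme rays.
-/

theorem SpansExtremeRay.map_linearEquiv {E : Type*} [AddCommMonoid E] [Module ℝ E]
    {C : Set E} {A : E} (hA : SpansExtremeRay C A) (e : E ≃ₗ[ℝ] E)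
    (he : ∀ X, e X ∈ C ↔ X ∈ C) : SpansExtremeRay C (e A) := by
  obtain ⟨hAC, hA0, hsplit⟩ := hA
  refine ⟨(he A).2 hAC, e.map_ne_zero_iff.2 hA0, fun X Y hX hY hXY => ?_⟩
  have hX' : e.symm X ∈ C := (he _).1 (by simpa using hX)
  have hY' : e.symm Y ∈ C := (he _).1 (by simpa using hY)
  obtain ⟨a, b, ha, hb, hXa, hYb⟩ :=
    hsplit _ _ hX' hY' (by rw [← map_add, ← hXY, e.symm_apply_apply])
  exact ⟨a, b, ha, hb, by rw [← map_smul, ← hXa, e.apply_symm_apply],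
    by rw [← map_smul, ← hYb, e.apply_symm_apply]⟩

section

variable {ι R : Type*} [Fintype ι] [DecidableEq ι] [CommRing R]

def transposeMulMulEquiv (Q : (Matrix ι ι R)ˣ) : Matrix ι ι R ≃ₗ[R] Matrix ι ι R where
  toFun X := (Q : Matrix ι ι R)ᵀ * X * Q
  invFun X := (↑Q⁻¹ : Matrix ι ι R)ᵀ * X * ↑Q⁻¹
  map_add' X Y := by simp only [Matrix.mul_add, Matrix.add_mul]
  map_smul' c X := by simp
  left_inv X := by
    simp only [← mul_assoc, ← transpose_mul, Units.mul_inv, transpose_one, one_mul]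
    simp [mul_assoc]
  right_inv X := by
    simp only [← mul_assoc, ← transpose_mul, Units.inv_mul, transpose_one, one_mul]
    simp [mul_assoc]

theorem transpose_permMatrix_mul_mul_permMatrix (σ : Equiv.Perm ι) (X : Matrix ι ι R) :
    (σ.permMatrix R)ᵀ * X * σ.permMatrix R = X.submatrix σ.symm σ.symm := by
  rw [transpose_permMatrix, Equiv.Perm.permMatrix, Equiv.Perm.permMatrix,
    PEquiv.toMatrix_toPEquiv_mul, PEquiv.mul_toMatrix_toPEquiv, submatrix_submatrix]
  rfl

end

theorem submatrix_mem_FWdual {n k : ℕ} {X : Matrix (Fin n) (Fin n) ℝ} (hX : X ∈ FWdual n k)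
    (σ : Equiv.Perm (Fin n)) : X.submatrix σ σ ∈ FWdual n k :=
  ⟨hX.1.submatrix σ, fun K hK =>
    (hX.2 (K.map σ.toEmbedding) (by rwa [Finset.card_map])).submatrix
      fun i : K => ⟨σ i, Finset.mem_map_of_mem _ i.2⟩⟩

theorem submatrix_mem_FWdual_iff {n k : ℕ} (X : Matrix (Fin n) (Fin n) ℝ)
    (σ : Equiv.Perm (Fin n)) :
    X.submatrix σ σ ∈ FWdual n k ↔ X ∈ FWdual n k :=
  ⟨fun h => by simpa using submatrix_mem_FWdual h σ.symm, fun h => submatrix_mem_FWdual h σ⟩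

theorem principalSub_diagonal_mul_mul_diagonal {ι : Type*} [Fintype ι] [DecidableEq ι]
    (d : ι → ℝ) (X : Matrix ι ι ℝ) (K : Finset ι) :
    principalSub (diagonal d * X * diagonal d) K =
      diagonal (fun i : K => d i) * principalSub X K * (diagonal fun i : K => d i)ᴴ := by
  ext i j
  simp [principalSub, mul_comm]

theorem diagonal_mul_mul_diagonal_mem_FWdual {n k : ℕ} {X : Matrix (Fin n) (Fin n) ℝ}
    (hX : X ∈ FWdual n k) (d : Fin n → ℝ) : diagonal d * X * diagonal d ∈ FWdual n k := by
  refine ⟨?_, fun K hK => ?_⟩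
  · rw [IsSymm, transpose_mul, transpose_mul, diagonal_transpose, hX.1.eq, mul_assoc]
  · rw [principalSub_diagonal_mul_mul_diagonal]
    exact (hX.2 K hK).mul_mul_conjTranspose_same _

theorem diagonal_mul_mul_diagonal_mem_FWdual_iff {n k : ℕ} (X : Matrix (Fin n) (Fin n) ℝ)
    {d : Fin n → ℝ} (hd : ∀ i, d i ≠ 0) :
    diagonal d * X * diagonal d ∈ FWdual n k ↔ X ∈ FWdual n k := by
  refine ⟨fun h => ?_, fun h => diagonal_mul_mul_diagonal_mem_FWdual h d⟩
  convert diagonal_mul_mul_diagonal_mem_FWdual h d⁻¹ using 1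
  ext i j
  simp only [diagonal_mul, mul_diagonal, Pi.inv_apply]
  field_simp [hd i, hd j]

/-- for `Q` a permutation matrix or a positive diagonal matrix, the map
`X ↦ Qᵀ X Q` is an automorphism of the cone `(FW^n_k)^*` and maps extreme rays to
extreme rays. -/
theorem stmt8 (n k : ℕ) (Q : Matrix (Fin n) (Fin n) ℝ)
    (hQ : (∃ σ : Equiv.Perm (Fin n), ∀ i j, Q i j = if σ i = j then 1 else 0) ∨
          (∃ d : Fin n → ℝ, (∀ i, 0 < d i) ∧ Q = Matrix.diagonal d)) :
    (∀ X : Matrix (Fin n) (Fin n) ℝ, X ∈ FWdual n k ↔ Qᵀ * X * Q ∈ FWdual n k) ∧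
    (∀ A, SpansExtremeRay (FWdual n k) A →
        SpansExtremeRay (FWdual n k) (Qᵀ * A * Q)) := by
  obtain ⟨hunit, hmem⟩ : IsUnit Q ∧ ∀ X, Qᵀ * X * Q ∈ FWdual n k ↔ X ∈ FWdual n k := by
    rcases hQ with ⟨σ, hσ⟩ | ⟨d, hd, rfl⟩
    · obtain rfl : Q = σ.permMatrix ℝ := by ext i j; simp [hσ]
      refine ⟨(isUnit_iff_isUnit_det _).2 (by simp), fun X => ?_⟩
      rw [transpose_permMatrix_mul_mul_permMatrix, submatrix_mem_FWdual_iff]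
    · refine ⟨isUnit_diagonal.2 (Pi.isUnit_iff.2 fun i => (hd i).ne'.isUnit), fun X => ?_⟩
      rw [diagonal_transpose, diagonal_mul_mul_diagonal_mem_FWdual_iff X fun i => (hd i).ne']
  exact ⟨fun X => (hmem X).symm,
    fun A hA => hA.map_linearEquiv (transposeMulMulEquiv hunit.unit) hmem⟩
end

section
/- For a ≥ (n−1)/(k−1) with 2 ≤ k ≤ n, the quadratic form p_n^a = (x₁ + ... + xₙ)² + (a−1)(x₁² + ... + xₙ²) is a sum of squares of k-nomials; equivalently, the n×n matrix with diagonal entries a and off-diagonal entries 1 has factor width at most k. -/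
open Matrix

/-!
Let `N` be the incidence matrix between the points of an `n`-set and its `k`-subsets. A point
lies in `C(n-1, k-1)` of the `k`-subsets and a pair of points in `C(n-2, k-2)`, so
`N Nᵀ / C(n-2, k-2)` has off-diagonal entries `1` and diagonal entries `(n-1)/(k-1)`. Hence the
matrix with diagonal `a` and off-diagonal `1` is `N Nᵀ / C(n-2, k-2) + (a - (n-1)/(k-1)) • 1`,
a nonnegative combination of Gram matrices of vectors with at most `k` nonzero entries. Each such
vector `w` contributes the square of the `k`-nomial `∑ wᵢ xᵢ` to the quadratic form `pₙᵃ`.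
-/

open MvPolynomial Finset

section FactorWidth

variable {ι : Type*} [Fintype ι] {k : ℕ}

lemma hasFactorWidthLE_mul_transpose {κ : Type*} [Fintype κ] (W : Matrix ι κ ℝ)
    (hW : ∀ j, {i | W i j ≠ 0}.ncard ≤ k) : HasFactorWidthLE (W * Wᵀ) k := by
  let e := Fintype.equivFin κ
  refine ⟨_, W.submatrix id e.symm, ?_, fun j => hW _⟩
  rw [transpose_submatrix, submatrix_mul_equiv, submatrix_id_id]

lemma HasFactorWidthLE.add {A B : Matrix ι ι ℝ} (hA : HasFactorWidthLE A k)
    (hB : HasFactorWidthLE B k) : HasFactorWidthLE (A + B) k := by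
  obtain ⟨_, V, rfl, hV⟩ := hA
  obtain ⟨_, U, rfl, hU⟩ := hB
  rw [← fromCols_mul_fromRows, ← transpose_fromCols]
  exact hasFactorWidthLE_mul_transpose _ fun | .inl j => hV j | .inr j => hU j

lemma HasFactorWidthLE.smul {A : Matrix ι ι ℝ} (hA : HasFactorWidthLE A k) {c : ℝ}
    (hc : 0 ≤ c) : HasFactorWidthLE (c • A) k := by
  obtain ⟨m, V, rfl, hV⟩ := hA
  refine ⟨m, √c • V, ?_, fun j => (Set.ncard_le_ncard ?_).trans (hV j)⟩
  · rw [transpose_smul, Matrix.smul_mul, Matrix.mul_smul, smul_smul, Real.mul_self_sqrt hc]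
  · exact fun i hi => right_ne_zero_of_mul hi

lemma hasFactorWidthLE_one [DecidableEq ι] (hk : 1 ≤ k) :
    HasFactorWidthLE (1 : Matrix ι ι ℝ) k := by
  have h := hasFactorWidthLE_mul_transpose (k := k) (1 : Matrix ι ι ℝ) fun j => by
    simpa [one_apply, eq_comm] using hk
  rwa [transpose_one, Matrix.one_mul] at h

end FactorWidth

section Incidence

variable (α : Type*) [Fintype α] [DecidableEq α] (k : ℕ) (R : Type*)

def subsetIncidence [Zero R] [One R] : Matrix α (powersetCard k (univ : Finset α)) R :=
  of fun i K => if i ∈ (K : Finset α) then 1 else 0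

variable {α k R}

lemma subsetIncidence_mul_transpose_apply [NonAssocSemiring R] (hk : 2 ≤ k) (i j : α) :
    (subsetIncidence α k R * (subsetIncidence α k R)ᵀ) i j =
      if i = j then ((Fintype.card α - 1).choose (k - 1) : R)
      else ((Fintype.card α - 2).choose (k - 2) : R) := by
  have hcount : (subsetIncidence α k R * (subsetIncidence α k R)ᵀ) i j =
      #{K ∈ powersetCard k univ | {i, j} ⊆ K} := by
    rw [← sum_boole, ← sum_coe_sort]
    simp only [mul_apply, subsetIncidence, transpose_apply, of_apply, ite_zero_mul_ite_zero,
      mul_one, insert_subset_iff, singleton_subset_iff]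
  rw [hcount, card_filter_powersetCard_subset _ _ _ (subset_univ _), card_univ]
  · split_ifs with hij
    · simp [hij]
    · simp [card_pair hij]
  · exact card_le_two.trans hk

lemma hasFactorWidthLE_subsetIncidence_mul_transpose :
    HasFactorWidthLE (subsetIncidence α k ℝ * (subsetIncidence α k ℝ)ᵀ) k := by
  refine hasFactorWidthLE_mul_transpose _ fun K => ?_
  have hsupp : {i | subsetIncidence α k ℝ i K ≠ 0} ⊆ (K : Finset α) := fun i hi => by
    by_contra hiK
    simp [subsetIncidence, hiK] at hi
  simpa [(mem_powersetCard.1 K.2).2] using Set.ncard_le_ncard hsupp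

end Incidence

lemma cast_choose_sub_one_div_choose_sub_two {n k : ℕ} (hk : 2 ≤ k) (hkn : k ≤ n) :
    ((n - 1).choose (k - 1) : ℝ) / (n - 2).choose (k - 2) = ((n : ℝ) - 1) / ((k : ℝ) - 1) := by
  obtain ⟨k, rfl⟩ := Nat.exists_eq_add_of_le' hk
  obtain ⟨n, rfl⟩ := Nat.exists_eq_add_of_le' (hk.trans hkn)
  have hpos : 0 < (n.choose k : ℝ) := by exact_mod_cast Nat.choose_pos (by omega)
  have hrec : ((n : ℝ) + 1) * n.choose k = (n + 1).choose (k + 1) * ((k : ℝ) + 1) := by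
    exact_mod_cast Nat.add_one_mul_choose_eq n k
  simp only [Nat.add_sub_cancel, Nat.add_succ_sub_one, Nat.cast_add, Nat.cast_ofNat]
  rw [div_eq_div_iff hpos.ne' (by linarith [k.cast_nonneg (α := ℝ)])]
  linarith

lemma hasFactorWidthLE_of_diag_of_offDiag_one {α : Type*} [Fintype α] [DecidableEq α] {k : ℕ}
    (hk : 2 ≤ k) (hkα : k ≤ Fintype.card α) {a : ℝ}
    (ha : ((Fintype.card α : ℝ) - 1) / ((k : ℝ) - 1) ≤ a) :
    HasFactorWidthLE (of fun i j : α => if i = j then a else 1) k := by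
  have hc : (0 : ℝ) < (Fintype.card α - 2).choose (k - 2) :=
    Nat.cast_pos.2 (Nat.choose_pos (by omega))
  have hdecomp : (of fun i j : α => if i = j then a else 1) =
      ((Fintype.card α - 2).choose (k - 2) : ℝ)⁻¹ •
          (subsetIncidence α k ℝ * (subsetIncidence α k ℝ)ᵀ) +
        (a - ((Fintype.card α : ℝ) - 1) / ((k : ℝ) - 1)) • 1 := by
    ext i j
    rw [Matrix.add_apply, Matrix.smul_apply, Matrix.smul_apply,
      subsetIncidence_mul_transpose_apply hk, one_apply]
    split_ifs with hij
    · rw [← cast_choose_sub_one_div_choose_sub_two hk hkα]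
      simp only [of_apply, if_pos hij, smul_eq_mul, mul_one]
      field_simp
      ring
    · simp [hij, hc.ne']
  rw [hdecomp]
  exact (hasFactorWidthLE_subsetIncidence_mul_transpose.smul (inv_nonneg.2 hc.le)).add
    ((hasFactorWidthLE_one (by omega)).smul (sub_nonneg.2 ha))

section QuadraticForms

variable {σ R : Type*} [Fintype σ] [CommSemiring R]

noncomputable def linearForm (v : σ → R) : MvPolynomial σ R :=
  ∑ i, C (v i) * X i

noncomputable def quadForm (A : Matrix σ σ R) : MvPolynomial σ R :=
  ∑ i, ∑ j, C (A i j) * (X i * X j)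

lemma card_support_linearForm_le (v : σ → R) :
    (linearForm v).support.card ≤ {i | v i ≠ 0}.ncard := by
  classical
  have hsupp : (linearForm v).support ⊆ {i | v i ≠ 0}.toFinset.image (Finsupp.single · 1) := by
    intro m hm
    rw [mem_support_iff, linearForm, coeff_sum] at hm
    obtain ⟨i, -, hi⟩ := exists_ne_zero_of_sum_ne_zero hm
    rw [coeff_C_mul, coeff_X] at hi
    split_ifs at hi with him
    · exact mem_image.2 ⟨i, by simpa using left_ne_zero_of_mul hi, him⟩
    · exact absurd (mul_zero _) hi
  rw [Set.ncard_eq_toFinset_card']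
  exact (card_le_card hsupp).trans card_image_le

lemma linearForm_sq (v : σ → R) :
    linearForm v ^ 2 = ∑ i, ∑ j, C (v i * v j) * (X i * X j) := by
  simp only [linearForm, sq, sum_mul_sum, C_mul]
  exact sum_congr rfl fun i _ => sum_congr rfl fun j _ => by ring

lemma quadForm_mul_transpose {κ : Type*} [Fintype κ] (V : Matrix σ κ R) :
    quadForm (V * Vᵀ) = ∑ l, linearForm (fun i => V i l) ^ 2 := by
  simp only [linearForm_sq, quadForm, mul_apply, transpose_apply, map_sum, sum_mul]
  exact (Finset.sum_comm.trans (sum_congr rfl fun _ _ => Finset.sum_comm)).symm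

end QuadraticForms

lemma HasFactorWidthLE.isSOkS_quadForm {n k : ℕ} {A : Matrix (Fin n) (Fin n) ℝ}
    (hA : HasFactorWidthLE A k) : IsSOkS k (quadForm A) := by
  obtain ⟨m, V, rfl, hV⟩ := hA
  exact ⟨m, fun l => linearForm (fun i => V i l),
    fun l => (card_support_linearForm_le _).trans (hV l), quadForm_mul_transpose V⟩

lemma quadForm_of_diag_of_offDiag_one {σ R : Type*} [Fintype σ] [DecidableEq σ] [CommRing R]
    (a : R) :
    quadForm (of fun i j : σ => if i = j then a else 1) =
      (∑ i, (X i : MvPolynomial σ R)) ^ 2 + C (a - 1) * ∑ i, X i ^ 2 := by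
  have hentry : ∀ i j : σ, C (if i = j then a else 1) * (X i * X j : MvPolynomial σ R) =
      X i * X j + if i = j then C (a - 1) * X i ^ 2 else 0 := by
    intro i j
    split_ifs with hij
    · rw [hij, C_sub, C_1]; ring
    · rw [C_1]; ring
  rw [sq (∑ i, X i), sum_mul_sum]
  simp only [quadForm, of_apply, hentry, sum_add_distrib, sum_ite_eq, mem_univ, if_true, mul_sum]

open MvPolynomial in
/-- for `a ≥ (n-1)/(k-1)`, `pₙᵃ = (∑ xᵢ)² + (a-1) ∑ xᵢ²` is a sum of
squares of `k`-nomials; equivalently the matrix with diagonal `a` and off-diagonal `1`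
has factor width at most `k`. -/
theorem stmt12 (n k : ℕ) (hk : 2 ≤ k) (hkn : k ≤ n) (a : ℝ)
    (ha : ((n : ℝ) - 1) / ((k : ℝ) - 1) ≤ a) :
    IsSOkS k ((∑ i, (X i : MvPolynomial (Fin n) ℝ)) ^ 2
        + C (a - 1) * ∑ i, (X i) ^ 2) ∧
    HasFactorWidthLE (Matrix.of fun i j : Fin n => if i = j then a else 1) k := by
  have hFW : HasFactorWidthLE (Matrix.of fun i j : Fin n => if i = j then a else 1) k :=
    hasFactorWidthLE_of_diag_of_offDiag_one hk (by simpa using hkn) (by simpa using ha)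
  refine ⟨?_, hFW⟩
  rw [← quadForm_of_diag_of_offDiag_one]
  exact hFW.isSOkS_quadForm
end

section
/- Fix n ≥ 1, r ≥ 0 and 2 ≤ k ≤ n. If (x₁² + ... + xₙ²)ʳ · [(x₁ + ... + xₙ)² + (a−1)(x₁² + ... + xₙ²)] is a sum of squares of k-nomials, then a ≥ (n−1)/(k−1); consequently (x₁ + ... + xₙ)² + (a−1)(x₁² + ... + xₙ²) is itself a sum of squares of k-nomials. -/
open Matrix

/-!
Pair polynomials with the linear functional `L` sending `x^α` to `k - 1` when every entry of `α`
is even and to `-1` otherwise; on squares this is the trace pairing with the dual certificate `B`.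
For a `k`-nomial `q`, grouping its coefficients by the parity class of the exponent gives
`L (q²) = k ∑ₜ sₜ² - (∑ₜ sₜ)²` with at most `k` classes, so `L (q²) ≥ 0` by Cauchy–Schwarz
(this is `B ∈ (FW_k)^*`). Since `(∑ xᵢ²)^r` only has even exponents, multiplying by it scales `L`
by `n^r`, and `L ((∑ xᵢ)² + (a - 1) ∑ xᵢ²) = n ((k - 1) a - (n - 1))`, which forces the bound.
Conversely, summing `(∑_{i ∈ S} xᵢ)²` over the `k`-subsets `S` gives
`C(n-2, k-2) (∑ xᵢ)² + C(n-2, k-1) ∑ xᵢ²`, and what remains of `(a - 1) ∑ xᵢ²` after scaling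
is a nonnegative multiple of `∑ xᵢ²` exactly when `a ≥ (n - 1)/(k - 1)`.
-/

open MvPolynomial Finset

namespace IsSOkS

variable {n k : ℕ} {p q : MvPolynomial (Fin n) ℝ}

theorem zero : IsSOkS k (0 : MvPolynomial (Fin n) ℝ) :=
  ⟨0, Fin.elim0, fun i => i.elim0, by simp⟩

theorem add (hp : IsSOkS k p) (hq : IsSOkS k q) : IsSOkS k (p + q) := by
  obtain ⟨m₁, q₁, h₁, rfl⟩ := hp
  obtain ⟨m₂, q₂, h₂, rfl⟩ := hq
  exact ⟨m₁ + m₂, Fin.append q₁ q₂, Fin.addCases (by simpa using h₁) (by simpa using h₂),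
    by simp [Fin.sum_univ_add]⟩

theorem sum {ι : Type*} {s : Finset ι} {f : ι → MvPolynomial (Fin n) ℝ}
    (h : ∀ i ∈ s, IsSOkS k (f i)) : IsSOkS k (∑ i ∈ s, f i) :=
  Finset.sum_induction f (IsSOkS k) (fun _ _ => add) zero h

theorem C_mul {c : ℝ} (hc : 0 ≤ c) (hp : IsSOkS k p) : IsSOkS k (C c * p) := by
  obtain ⟨m, q, hq, rfl⟩ := hp
  refine ⟨m, fun i => √c • q i, fun i => (card_le_card support_smul).trans (hq i), ?_⟩
  simp [C_mul', smul_sum, smul_pow, Real.sq_sqrt hc]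

end IsSOkS

theorem isSOkS_sq {n k : ℕ} {q : MvPolynomial (Fin n) ℝ} (hq : #q.support ≤ k) :
    IsSOkS k (q ^ 2) :=
  ⟨1, fun _ => q, fun _ => hq, by simp⟩

theorem sum_sum_mul_ite_eq_sub_one_nonneg {ι κ : Type*} [DecidableEq κ] (s : Finset ι)
    (f : ι → κ) (c : ι → ℝ) {k : ℕ} (hk : #(s.image f) ≤ k) :
    0 ≤ ∑ i ∈ s, ∑ j ∈ s, c i * c j * ((if f i = f j then (k : ℝ) else 0) - 1) := by
  set b : κ → ℝ := fun t => ∑ i ∈ s with f i = t, c i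
  have hfiber (g : ι → ℝ) : ∑ i ∈ s, g i = ∑ t ∈ s.image f, ∑ i ∈ s with f i = t, g i :=
    (sum_fiberwise_of_maps_to (fun i hi => mem_image_of_mem f hi) g).symm
  have hsame : ∑ i ∈ s, ∑ j ∈ s, (if f i = f j then c i * c j else 0) =
      ∑ t ∈ s.image f, b t ^ 2 := by
    rw [hfiber]
    refine sum_congr rfl fun t _ => ?_
    rw [sq, sum_mul_sum]
    refine sum_congr rfl fun i hi => ?_
    rw [← sum_filter, (mem_filter.1 hi).2]
    simp only [eq_comm]
  have hexpand : ∑ i ∈ s, ∑ j ∈ s, c i * c j * ((if f i = f j then (k : ℝ) else 0) - 1) =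
      k * ∑ t ∈ s.image f, b t ^ 2 - (∑ t ∈ s.image f, b t) ^ 2 := by
    rw [← hsame, ← hfiber, sq, sum_mul_sum, mul_sum, ← sum_sub_distrib]
    refine sum_congr rfl fun i _ => ?_
    rw [mul_sum, ← sum_sub_distrib]
    refine sum_congr rfl fun j _ => ?_
    split_ifs <;> ring
  rw [hexpand, sub_nonneg]
  calc (∑ t ∈ s.image f, b t) ^ 2 ≤ #(s.image f) * ∑ t ∈ s.image f, b t ^ 2 :=
        sq_sum_le_card_mul_sum_sq
    _ ≤ k * ∑ t ∈ s.image f, b t ^ 2 := by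
        gcongr

section ParityFunctional

open scoped Classical

variable {σ : Type*} {k : ℕ}

noncomputable def parityWeight (k : ℕ) (α : σ →₀ ℕ) : ℝ :=
  if ∀ i, Even (α i) then (k : ℝ) - 1 else -1

noncomputable def parityFunctional (k : ℕ) : MvPolynomial σ ℝ →ₗ[ℝ] ℝ :=
  Finsupp.linearCombination ℝ (parityWeight k) ∘ₗ
    (AddMonoidAlgebra.coeffLinearEquiv ℝ).toLinearMap

def parity (α : σ →₀ ℕ) : σ → ZMod 2 := fun i => α i

theorem parityWeight_add (α β : σ →₀ ℕ) :
    parityWeight k (α + β) = (if parity α = parity β then (k : ℝ) else 0) - 1 := by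
  have hpar : (∀ i, Even ((α + β) i)) ↔ parity α = parity β := by
    simp only [parity, Finsupp.add_apply, _root_.funext_iff]
    refine forall_congr' fun i => ?_
    rw [Nat.even_add, ZMod.natCast_eq_natCast_iff, Nat.ModEq, Nat.even_iff, Nat.even_iff]
    omega
  rw [parityWeight, if_congr hpar rfl rfl]
  split_ifs <;> ring

theorem parity_single_one_inj {i j : σ} :
    parity (Finsupp.single i 1) = parity (Finsupp.single j 1) ↔ i = j := by
  refine ⟨fun h => by_contra fun hij => ?_, fun h => h ▸ rfl⟩
  have := congrFun h i
  simp [parity, Ne.symm hij] at this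

theorem parityWeight_two_smul_add (d β : σ →₀ ℕ) :
    parityWeight k (2 • d + β) = parityWeight k β := by
  simp [parityWeight, Nat.even_add]

theorem parityFunctional_monomial (α : σ →₀ ℕ) (c : ℝ) :
    parityFunctional k (monomial α c) = c * parityWeight k α :=
  sum_monomial_eq (by simp)

theorem parityFunctional_mul (p q : MvPolynomial σ ℝ) :
    parityFunctional k (p * q) = ∑ α ∈ p.support, ∑ β ∈ q.support,
      p.coeff α * q.coeff β * parityWeight k (α + β) := by
  conv_lhs => rw [p.as_sum, q.as_sum, sum_mul_sum]
  simp [monomial_mul, parityFunctional_monomial]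

theorem parityFunctional_sq_nonneg {q : MvPolynomial σ ℝ} (hq : #q.support ≤ k) :
    0 ≤ parityFunctional k (q ^ 2) := by
  rw [sq, parityFunctional_mul]
  simp only [parityWeight_add]
  exact sum_sum_mul_ite_eq_sub_one_nonneg _ parity _ (card_image_le.trans hq)

theorem parityFunctional_monomial_two_smul_mul (d : σ →₀ ℕ) (c : ℝ) (q : MvPolynomial σ ℝ) :
    parityFunctional k (monomial (2 • d) c * q) = c * parityFunctional k q := by
  induction q using MvPolynomial.induction_on' with
  | monomial β c' =>
    rw [monomial_mul, parityFunctional_monomial, parityFunctional_monomial,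
      parityWeight_two_smul_add]
    ring
  | add p q hp hq => rw [mul_add, map_add, map_add, hp, hq, mul_add]

theorem parityFunctional_expand_two_mul (f q : MvPolynomial σ ℝ) :
    parityFunctional k (expand 2 f * q) = eval 1 f * parityFunctional k q := by
  induction f using MvPolynomial.induction_on' with
  | monomial d c => simp [parityFunctional_monomial_two_smul_mul, eval_monomial]
  | add f g hf hg => rw [map_add, add_mul, map_add, hf, hg, map_add, add_mul]

end ParityFunctional

theorem parityFunctional_nonneg_of_isSOkS {n k : ℕ} {p : MvPolynomial (Fin n) ℝ}
    (hp : IsSOkS k p) : 0 ≤ parityFunctional k p := by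
  obtain ⟨m, q, hq, rfl⟩ := hp
  rw [map_sum]
  exact sum_nonneg fun i _ => parityFunctional_sq_nonneg (hq i)

section SumOfVariables

variable {σ : Type*} [Fintype σ] {k : ℕ}

theorem parityFunctional_sq_sum_X :
    parityFunctional k ((∑ i, X i : MvPolynomial σ ℝ) ^ 2) =
      Fintype.card σ * (k - Fintype.card σ) := by
  classical
  simp only [sq, sum_mul_sum, map_sum, X, monomial_mul, parityFunctional_monomial,
    parityWeight_add, parity_single_one_inj]
  simp [sum_sub_distrib, sum_ite_eq]
  ring

theorem parityFunctional_sum_X_sq :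
    parityFunctional k (∑ i, X i ^ 2 : MvPolynomial σ ℝ) = Fintype.card σ * (k - 1) := by
  have h := parityFunctional_expand_two_mul (k := k) (∑ i, X i : MvPolynomial σ ℝ) 1
  rw [← C_1, ← monomial_zero', parityFunctional_monomial] at h
  simpa [parityWeight] using h

theorem parityFunctional_sum_X_sq_pow_mul (r : ℕ) (a : ℝ) :
    parityFunctional k ((∑ i, X i ^ 2 : MvPolynomial σ ℝ) ^ r *
        ((∑ i, X i) ^ 2 + C (a - 1) * ∑ i, X i ^ 2)) =
      Fintype.card σ ^ (r + 1) * ((k - 1) * a - (Fintype.card σ - 1)) := by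
  have hexpand : (∑ i, X i ^ 2 : MvPolynomial σ ℝ) ^ r = expand 2 ((∑ i, X i) ^ r) := by
    simp
  rw [hexpand, parityFunctional_expand_two_mul, map_add, C_mul', map_smul,
    parityFunctional_sq_sum_X, parityFunctional_sum_X_sq]
  simp
  ring

end SumOfVariables

theorem sum_sum_sum_mem_eq_sum_card_smul {ι M : Type*} [Fintype ι] [DecidableEq ι]
    [AddCommMonoid M] (P : Finset (Finset ι)) (g : ι → ι → M) :
    ∑ S ∈ P, ∑ i ∈ S, ∑ j ∈ S, g i j = ∑ i, ∑ j, #{S ∈ P | {i, j} ⊆ S} • g i j := by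
  have hindicator (S : Finset ι) :
      ∑ i ∈ S, ∑ j ∈ S, g i j = ∑ i, ∑ j, if {i, j} ⊆ S then g i j else 0 := by
    simp [insert_subset_iff, ite_and]
  simp_rw [hindicator]
  rw [sum_comm]
  refine sum_congr rfl fun i _ => ?_
  rw [sum_comm]
  refine sum_congr rfl fun j _ => ?_
  rw [← sum_filter, sum_const]

theorem sum_powersetCard_sq_sum_X {σ R : Type*} [Fintype σ] [DecidableEq σ] [CommSemiring R]
    {k : ℕ} (hk : 2 ≤ k) (hσ : 2 ≤ Fintype.card σ) :
    ∑ S ∈ powersetCard k univ, (∑ i ∈ S, X i : MvPolynomial σ R) ^ 2 =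
      (Fintype.card σ - 2).choose (k - 2) • (∑ i, X i) ^ 2 +
        (Fintype.card σ - 2).choose (k - 1) • ∑ i, X i ^ 2 := by
  have hcard (i j : σ) : #{S ∈ powersetCard k univ | {i, j} ⊆ S} =
      (Fintype.card σ - 2).choose (k - 2) +
        if i = j then (Fintype.card σ - 2).choose (k - 1) else 0 := by
    rw [card_filter_powersetCard_subset _ _ _ (subset_univ _) (card_le_two.trans hk), card_univ]
    rcases eq_or_ne i j with rfl | hne
    · rw [pair_eq_singleton, card_singleton, if_pos rfl,
        show Fintype.card σ - 1 = Fintype.card σ - 2 + 1 by omega,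
        show k - 1 = k - 2 + 1 by omega, Nat.choose_succ_succ']
    · rw [card_pair hne, if_neg hne, add_zero]
  simp_rw [sq, sum_mul_sum, sum_sum_sum_mem_eq_sum_card_smul, hcard, add_smul, sum_add_distrib,
    ← smul_sum, ite_smul, zero_smul, sum_ite_eq, if_pos (mem_univ _), smul_sum]

theorem card_support_sum_X_le {σ R : Type*} [CommSemiring R] [Nontrivial R] (S : Finset σ) :
    #(∑ i ∈ S, X i : MvPolynomial σ R).support ≤ #S := by
  classical
  exact (card_le_card support_sum).trans (card_biUnion_le.trans (by simp [support_X]))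

theorem div_le_of_isSOkS_sum_X_sq_pow_mul {n k r : ℕ} (hn : 1 ≤ n) (hk : 2 ≤ k) {a : ℝ}
    (h : IsSOkS k ((∑ i, X i ^ 2 : MvPolynomial (Fin n) ℝ) ^ r *
      ((∑ i, X i) ^ 2 + C (a - 1) * ∑ i, X i ^ 2))) :
    ((n : ℝ) - 1) / ((k : ℝ) - 1) ≤ a := by
  have hL := parityFunctional_nonneg_of_isSOkS h
  rw [parityFunctional_sum_X_sq_pow_mul, Fintype.card_fin] at hL
  have hk' : (0 : ℝ) < k - 1 := by
    have : (2 : ℝ) ≤ k := by exact_mod_cast hk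
    linarith
  have hn' : (0 : ℝ) < n ^ (r + 1) := by positivity
  rw [div_le_iff₀ hk']
  linarith [(mul_nonneg_iff_of_pos_left hn').1 hL]

theorem isSOkS_sq_sum_X_add_C_mul_sum_X_sq {n k : ℕ} (hk : 2 ≤ k) (hkn : k ≤ n) {a : ℝ}
    (ha : ((n : ℝ) - 1) / ((k : ℝ) - 1) ≤ a) :
    IsSOkS k ((∑ i, X i : MvPolynomial (Fin n) ℝ) ^ 2 + C (a - 1) * ∑ i, X i ^ 2) := by
  set c : ℝ := ↑((n - 2).choose (k - 2))
  set d : ℝ := ↑((n - 2).choose (k - 1))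
  have hc : 0 < c := Nat.cast_pos.2 (Nat.choose_pos (by omega))
  have hdc : d * (k - 1) = c * (n - k) := by
    have h := Nat.choose_succ_right_eq (n - 2) (k - 2)
    rw [show k - 2 + 1 = k - 1 by omega, show n - 2 - (k - 2) = n - k by omega] at h
    have h' := congrArg (Nat.cast : ℕ → ℝ) h
    push_cast [Nat.cast_sub (by omega : 1 ≤ k), Nat.cast_sub hkn] at h'
    exact h'
  have hμ : 0 ≤ a - 1 - d / c := by
    have hk' : (0 : ℝ) < k - 1 := by
      have : (2 : ℝ) ≤ k := by exact_mod_cast hk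
      linarith
    have hratio : 1 + d / c = ((n : ℝ) - 1) / ((k : ℝ) - 1) := by
      field_simp
      linear_combination hdc
    linarith
  have hdecomp : (∑ i, X i : MvPolynomial (Fin n) ℝ) ^ 2 + C (a - 1) * ∑ i, X i ^ 2 =
      C c⁻¹ * ∑ S ∈ powersetCard k univ, (∑ i ∈ S, X i) ^ 2 +
        C (a - 1 - d / c) * ∑ i, X i ^ 2 := by
    rw [sum_powersetCard_sq_sum_X hk (by simpa using hk.trans hkn), Fintype.card_fin,
      nsmul_eq_mul, nsmul_eq_mul, ← map_natCast C, ← map_natCast C]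
    have h1 : C c⁻¹ * C c = (1 : MvPolynomial (Fin n) ℝ) := by
      rw [← C_mul, inv_mul_cancel₀ hc.ne', C_1]
    have h2 : C c⁻¹ * C d + C (a - 1 - d / c) = (C (a - 1) : MvPolynomial (Fin n) ℝ) := by
      rw [← C_mul, ← C_add]
      congr 1
      field_simp
      ring
    linear_combination (-(∑ i, X i) ^ 2) * h1 - (∑ i, X i ^ 2) * h2
  rw [hdecomp]
  refine ((IsSOkS.sum fun S hS => isSOkS_sq ?_).C_mul (inv_nonneg.2 hc.le)).add
    ((IsSOkS.sum fun i _ => isSOkS_sq ?_).C_mul hμ)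
  · exact (card_support_sum_X_le S).trans (mem_powersetCard.1 hS).2.le
  · rw [support_X, card_singleton]
    omega

open MvPolynomial in
/-- if `(∑ xᵢ²)^r ⬝ pₙᵃ` is a sum of squares of `k`-nomials then
`a ≥ (n-1)/(k-1)`, and consequently `pₙᵃ` is itself a sum of squares of `k`-nomials. -/
theorem stmt14 (n k r : ℕ) (hn : 1 ≤ n) (hk : 2 ≤ k) (hkn : k ≤ n) (a : ℝ)
    (h : IsSOkS k ((∑ i, (X i : MvPolynomial (Fin n) ℝ) ^ 2) ^ r *
        ((∑ i, X i) ^ 2 + C (a - 1) * ∑ i, (X i) ^ 2))) :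
    ((n : ℝ) - 1) / ((k : ℝ) - 1) ≤ a ∧
    IsSOkS k ((∑ i, (X i : MvPolynomial (Fin n) ℝ)) ^ 2
        + C (a - 1) * ∑ i, (X i) ^ 2) := by
  have hbound := div_le_of_isSOkS_sum_X_sq_pow_mul hn hk h
  exact ⟨hbound, isSOkS_sq_sum_X_add_C_mul_sum_X_sq hk hkn hbound⟩
end

section
/- Let i and j be exponent vectors (in ℤ_{≥0}^n) of monomials of degree r+1. Define a symmetric matrix B indexed by such vectors by B_{ij} = k−1 if every entry of i+j is even, and B_{ij} = −1 otherwise. Then every k×k principal submatrix of B is positive semidefinite, i.e., B ∈ (FW_k^{binom(n+r, r+1)})*. -/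
open Matrix

open Finset

/-!
Reduced mod 2, the exponent vectors fall into parity classes, and `i + j` is even exactly when
`i` and `j` lie in the same class. So a principal submatrix of `B` is `k E - J`, where `E` is the
indicator matrix of "same class" and `J` the all-ones matrix. With `s_a` the sum of the entries of
`x` over class `a`, its quadratic form is `k ∑ s_a² - (∑ s_a)²`, which is nonnegative by
Cauchy–Schwarz because a `k × k` submatrix meets at most `k` classes.
-/

section SameClass

variable {ι α : Type*} [Fintype ι] [DecidableEq α]

theorem sum_sum_ite_eq_mul_eq_sum_fiber_sq (p : ι → α) (x : ι → ℝ) :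
    ∑ i, ∑ j, (if p i = p j then x i * x j else 0) =
      ∑ a ∈ univ.image p, (∑ i with p i = a, x i) ^ 2 := by
  have hrow : ∀ i, ∑ j, (if p i = p j then x i * x j else 0) =
      x i * ∑ j with p j = p i, x j := by
    intro i
    rw [sum_filter, mul_sum]
    exact sum_congr rfl fun j _ => by simp [eq_comm]
  simp_rw [hrow]
  refine (sum_image' (s := univ) (g := p) _ fun i _ => ?_).symm
  rw [sq, sum_mul]
  exact sum_congr rfl fun j hj => by rw [(mem_filter.mp hj).2]

theorem posSemidef_of_card_image_le {p : ι → α} {c : ℝ} (hc : ((univ.image p).card : ℝ) ≤ c) :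
    (of fun i j => if p i = p j then c - 1 else -1).PosSemidef := by
  rw [posSemidef_iff_dotProduct_mulVec]
  refine ⟨?_, fun x => ?_⟩
  · ext i j
    simp only [conjTranspose_apply, of_apply, star_trivial, eq_comm]
  set S : α → ℝ := fun a => ∑ i with p i = a, x i
  have hquad : star x ⬝ᵥ ((of fun i j => if p i = p j then c - 1 else -1) *ᵥ x) =
      c * ∑ a ∈ univ.image p, S a ^ 2 - (∑ a ∈ univ.image p, S a) ^ 2 := by
    rw [sum_fiberwise_of_maps_to (fun i _ => mem_image_of_mem p (mem_univ i)),
      ← sum_sum_ite_eq_mul_eq_sum_fiber_sq, sq, sum_mul_sum, mul_sum]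
    simp only [dotProduct, mulVec, of_apply, star_trivial, Pi.star_apply, mul_sum,
      ← sum_sub_distrib]
    refine sum_congr rfl fun i _ => sum_congr rfl fun j _ => ?_
    split_ifs <;> ring
  have hsq : 0 ≤ ∑ a ∈ univ.image p, S a ^ 2 := sum_nonneg fun a _ => sq_nonneg _
  rw [hquad, sub_nonneg]
  exact sq_sum_le_card_mul_sum_sq.trans (mul_le_mul_of_nonneg_right hc hsq)

end SameClass

theorem Finsupp.add_mod_two_eq_zero_iff {σ : Type*} (a b : σ →₀ ℕ) :
    (∀ t, (a + b) t % 2 = 0) ↔ (fun t => a t % 2) = fun t => b t % 2 := by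
  simp only [Finsupp.add_apply, funext_iff]
  exact forall_congr' fun t => by omega

theorem stmt15_general (n k : ℕ) (N : ℕ)
    (z : Fin N → (Fin n →₀ ℕ))
    (B : Matrix (Fin N) (Fin N) ℝ)
    (hB : ∀ i j, B i j = if ∀ t, (z i + z j) t % 2 = 0 then (k : ℝ) - 1 else -1) :
    ∀ K : Finset (Fin N), K.card = k → (principalSub B K).PosSemidef := by
  intro K hK
  set parity : K → Fin n → ℕ := fun i t => z i t % 2
  have hsub : principalSub B K =
      of fun i j => if parity i = parity j then (k : ℝ) - 1 else -1 := by
    ext i j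
    simp only [principalSub, submatrix_apply, hB, Finsupp.add_mod_two_eq_zero_iff, of_apply]
    rfl
  have hclasses : #(univ.image parity) ≤ k :=
    card_image_le.trans_eq (by rw [card_univ, Fintype.card_coe, hK])
  rw [hsub]
  exact posSemidef_of_card_image_le (by exact_mod_cast hclasses)

/-- the matrix `B` indexed by the degree-`(r+1)` exponent vectors with
entry `k - 1` when `i + j` is even and `-1` otherwise has all of its `k × k` principal
submatrices psd, i.e. `B ∈ (FW_k)^*`. -/
theorem stmt15 (n r k : ℕ) (N : ℕ) (hN : N = Nat.choose (n + r) (r + 1))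
    (z : Fin N → (Fin n →₀ ℕ)) (hz : Function.Injective z)
    (hzr : Set.range z = {m : Fin n →₀ ℕ | (m.sum fun _ e => e) = r + 1})
    (B : Matrix (Fin N) (Fin N) ℝ)
    (hB : ∀ i j, B i j = if ∀ t, (z i + z j) t % 2 = 0 then (k : ℝ) - 1 else -1) :
    ∀ K : Finset (Fin N), K.card = k → (principalSub B K).PosSemidef :=
  stmt15_general n k N z B hB
end

section
/- Let q(x) = Σᵢ qᵢxᵢ² + Σ_{i<j} q_{ij}xᵢxⱼ be a quadratic form. If the quadratic form q̂(x) = Σᵢ qᵢxᵢ² − Σ_{i<j} |q_{ij}|xᵢxⱼ is nonnegative on ℝⁿ, then q is a sum of squares of binomials. -/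
open Matrix

namespace SOBS

open Finset in
lemma pair_sum_eq {n : ℕ} (f : Fin n → Fin n → ℝ) (hdiag : ∀ i, f i i = 0) :
    ∑ i, ∑ j, f i j
      = ∑ ij ∈ Finset.univ.filter (fun ij : Fin n × Fin n => ij.1 < ij.2),
          (f ij.1 ij.2 + f ij.2 ij.1) := by
  classical
  have h1 : ∑ i, ∑ j, f i j = ∑ p : Fin n × Fin n, f p.1 p.2 := by
    rw [Fintype.sum_prod_type]
  rw [h1, ← Finset.sum_filter_add_sum_filter_not Finset.univ
      (fun p : Fin n × Fin n => p.1 < p.2) (fun p => f p.1 p.2)]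
  have h2 : ∑ p ∈ Finset.univ.filter (fun p : Fin n × Fin n => ¬ p.1 < p.2), f p.1 p.2
      = ∑ p ∈ Finset.univ.filter (fun p : Fin n × Fin n => p.2 < p.1), f p.1 p.2 := by
    refine (Finset.sum_subset ?_ ?_).symm
    · intro p hp
      simp only [mem_filter, mem_univ, true_and] at *
      omega
    · intro p hp hp2
      simp only [mem_filter, mem_univ, true_and] at *
      have h : p.1 = p.2 := by omega
      rw [h, hdiag]
  have h3 : ∑ p ∈ Finset.univ.filter (fun p : Fin n × Fin n => p.2 < p.1), f p.1 p.2
      = ∑ p ∈ Finset.univ.filter (fun p : Fin n × Fin n => p.1 < p.2), f p.2 p.1 := by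
    apply Finset.sum_nbij' (fun p => Prod.swap p) (fun p => Prod.swap p) <;>
      simp [Finset.mem_filter]
  rw [h2, h3, ← Finset.sum_add_distrib]

noncomputable def csym {n : ℕ} (u : Fin n → Fin n → ℝ) (i j : Fin n) : ℝ :=
  if i < j then |u i j| else if j < i then |u j i| else 0

noncomputable def wsym {n : ℕ} (u : Fin n → Fin n → ℝ) (i j : Fin n) : ℝ :=
  if i < j then u i j else if j < i then u j i else 0

lemma csym_symm {n : ℕ} (u : Fin n → Fin n → ℝ) (i j : Fin n) :
    csym u i j = csym u j i := by
  unfold csym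
  rcases lt_trichotomy i j with h | h | h
  · rw [if_pos h, if_neg (asymm h), if_pos h]
  · subst h; simp [lt_irrefl]
  · rw [if_neg (asymm h), if_pos h, if_pos h]

lemma wsym_symm {n : ℕ} (u : Fin n → Fin n → ℝ) (i j : Fin n) :
    wsym u i j = wsym u j i := by
  unfold wsym
  rcases lt_trichotomy i j with h | h | h
  · rw [if_pos h, if_neg (asymm h), if_pos h]
  · subst h; simp [lt_irrefl]
  · rw [if_neg (asymm h), if_pos h, if_pos h]

lemma csym_diag {n : ℕ} (u : Fin n → Fin n → ℝ) (i : Fin n) : csym u i i = 0 := by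
  simp [csym, lt_irrefl]

lemma wsym_diag {n : ℕ} (u : Fin n → Fin n → ℝ) (i : Fin n) : wsym u i i = 0 := by
  simp [wsym, lt_irrefl]

lemma csym_nonneg {n : ℕ} (u : Fin n → Fin n → ℝ) (i j : Fin n) : 0 ≤ csym u i j := by
  unfold csym
  split
  · exact abs_nonneg _
  · split
    · exact abs_nonneg _
    · exact le_refl 0

lemma abs_wsym {n : ℕ} (u : Fin n → Fin n → ℝ) (i j : Fin n) :
    |wsym u i j| = csym u i j := by
  unfold csym wsym
  split
  · rfl
  · split
    · rfl
    · exact abs_zero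

lemma csym_lt {n : ℕ} (u : Fin n → Fin n → ℝ) {i j : Fin n} (h : i < j) :
    csym u i j = |u i j| := by rw [csym, if_pos h]

lemma wsym_lt {n : ℕ} (u : Fin n → Fin n → ℝ) {i j : Fin n} (h : i < j) :
    wsym u i j = u i j := by rw [wsym, if_pos h]

noncomputable def Mmat {n : ℕ} (u : Fin n → Fin n → ℝ) (d : Fin n → ℝ) :
    Matrix (Fin n) (Fin n) ℝ :=
  fun i j => if i = j then d i else -(csym u i j) / 2

lemma Mmat_symm {n : ℕ} (u : Fin n → Fin n → ℝ) (d : Fin n → ℝ) (i j : Fin n) :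
    Mmat u d i j = Mmat u d j i := by
  unfold Mmat
  by_cases h : i = j
  · subst h; rfl
  · rw [if_neg h, if_neg (fun h' => h h'.symm), csym_symm]

lemma Mmat_off {n : ℕ} (u : Fin n → Fin n → ℝ) (d : Fin n → ℝ) (i j : Fin n)
    (h : i ≠ j) : Mmat u d i j ≤ 0 := by
  unfold Mmat
  rw [if_neg h]
  have := csym_nonneg u i j
  linarith

lemma null_ker {n : ℕ} (M : Matrix (Fin n) (Fin n) ℝ) (hsym : ∀ i j, M i j = M j i)
    (H : ∀ x : Fin n → ℝ, 0 ≤ x ⬝ᵥ (M *ᵥ x)) (z : Fin n → ℝ)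
    (hz : z ⬝ᵥ (M *ᵥ z) = 0) : ∀ i, (M *ᵥ z) i = 0 := by
  intro i
  set e : Fin n → ℝ := Pi.single i 1 with he
  have he1 : ∀ w : Fin n → ℝ, e ⬝ᵥ w = w i := by
    intro w; simp [he, dotProduct, Pi.single_apply]
  have he2 : M *ᵥ e = fun j => M j i := by
    funext j; simp [he, Matrix.mulVec, dotProduct, Pi.single_apply]
  have he3 : z ⬝ᵥ (M *ᵥ e) = (M *ᵥ z) i := by
    rw [he2]
    simp only [Matrix.mulVec, dotProduct]
    exact Finset.sum_congr rfl fun j _ => by rw [hsym i j]; ring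
  have key : ∀ t : ℝ, 0 ≤ M i i * t ^ 2 + 2 * ((M *ᵥ z) i) * t := by
    intro t
    have h := H (z + t • e)
    have hexp : (z + t • e) ⬝ᵥ (M *ᵥ (z + t • e))
        = z ⬝ᵥ (M *ᵥ z) + t * (z ⬝ᵥ (M *ᵥ e)) + t * (e ⬝ᵥ (M *ᵥ z)) + t ^ 2 * (e ⬝ᵥ (M *ᵥ e)) := by
      rw [Matrix.mulVec_add, Matrix.mulVec_smul, dotProduct_add, add_dotProduct,
        add_dotProduct, dotProduct_smul, smul_dotProduct,
        smul_dotProduct, dotProduct_smul]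
      simp only [smul_eq_mul]
      ring
    rw [hexp, hz, he3, he1, he1 (M *ᵥ e), he2] at h
    simp only at h
    linarith [h]
  set a := M i i with ha
  set b := (M *ᵥ z) i with hb
  by_contra hb0
  set D := |a| + 1 with hD
  have hDpos : (0:ℝ) < D := by positivity
  have h2 : a * (-b / D) ^ 2 + 2 * b * (-b / D) = b ^ 2 * (a - 2 * D) / D ^ 2 := by
    field_simp
    ring
  have h3 := key (-b / D)
  rw [h2] at h3
  have h4 : 0 ≤ b ^ 2 * (a - 2 * D) := by
    have := (div_nonneg_iff.mp h3)
    rcases this with ⟨h, _⟩ | ⟨h, h'⟩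
    · exact h
    · nlinarith
  have hb2 : 0 < b ^ 2 := by positivity
  nlinarith [le_abs_self a, abs_nonneg a]

lemma pd_pos_solution {n : ℕ} (A : Matrix (Fin n) (Fin n) ℝ) (hA : A.PosDef)
    (hoff : ∀ i j, i ≠ j → A i j ≤ 0) :
    ∃ v : Fin n → ℝ, (∀ i, 0 < v i) ∧ A *ᵥ v = 1 := by
  have hdet : IsUnit A.det := hA.det_pos.ne'.isUnit
  set v := A⁻¹ *ᵥ 1 with hv
  have hAv : A *ᵥ v = 1 := by
    rw [hv, Matrix.mulVec_mulVec, Matrix.mul_nonsing_inv _ hdet, Matrix.one_mulVec]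
  set w : Fin n → ℝ := fun i => max (-(v i)) 0 with hwdef
  set u : Fin n → ℝ := fun i => max (v i) 0 with hudef
  have hw0 : ∀ i, 0 ≤ w i := fun i => le_max_right _ _
  have hu0 : ∀ i, 0 ≤ u i := fun i => le_max_right _ _
  have huw : u - w = v := by
    funext i; simp only [hwdef, hudef, Pi.sub_apply]
    rcases le_total (v i) 0 with h | h
    · rw [max_eq_right h, max_eq_left (by linarith)]; ring
    · rw [max_eq_left h, max_eq_right (by linarith)]; ring
  have hcomp : ∀ i, w i * u i = 0 := by
    intro i; simp only [hwdef, hudef]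
    rcases le_total (v i) 0 with h | h
    · rw [max_eq_right h]; ring
    · rw [max_eq_right (by linarith : -(v i) ≤ 0)]; ring
  have h1 : w ⬝ᵥ (A *ᵥ v) = ∑ i, w i := by rw [hAv]; simp [dotProduct]
  have h2 : w ⬝ᵥ (A *ᵥ v) = w ⬝ᵥ (A *ᵥ u) - w ⬝ᵥ (A *ᵥ w) := by
    rw [← huw, Matrix.mulVec_sub, dotProduct_sub]
  have hqw : 0 ≤ w ⬝ᵥ (A *ᵥ w) := by
    have := hA.posSemidef.dotProduct_mulVec_nonneg w
    simpa using this
  have h3 : w ⬝ᵥ (A *ᵥ u) ≤ 0 := by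
    simp only [dotProduct, Matrix.mulVec]
    apply Finset.sum_nonpos
    intro i _
    rw [Finset.mul_sum]
    apply Finset.sum_nonpos
    intro j _
    by_cases hij : i = j
    · subst hij
      have h5 : w i * (A i i * u i) = A i i * (w i * u i) := by ring
      rw [h5, hcomp i, mul_zero]
    · have h5 : A i j * u j ≤ 0 :=
        mul_nonpos_iff.mpr (Or.inr ⟨hoff i j hij, hu0 j⟩)
      exact mul_nonpos_iff.mpr (Or.inl ⟨hw0 i, h5⟩)
  have hsum0 : ∑ i, w i = 0 := le_antisymm (by rw [← h1, h2]; linarith)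
    (Finset.sum_nonneg fun i _ => hw0 i)
  have hwz : ∀ i, w i = 0 := by
    intro i
    exact (Finset.sum_eq_zero_iff_of_nonneg (fun i _ => hw0 i)).mp hsum0 i (Finset.mem_univ i)
  have hvnn : ∀ i, 0 ≤ v i := by
    intro i
    have := congrFun huw i
    simp only [Pi.sub_apply, hwz i, sub_zero] at this
    rw [← this]; exact hu0 i
  refine ⟨v, fun i => ?_, hAv⟩
  have hAvi : ∑ j, A i j * v j = 1 := by
    have := congrFun hAv i
    simpa [Matrix.mulVec, dotProduct] using this
  have hle : ∑ j, A i j * v j ≤ A i i * v i := by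
    rw [← Finset.sum_erase_add _ _ (Finset.mem_univ i)]
    have h6 : ∑ j ∈ Finset.univ.erase i, A i j * v j ≤ 0 := by
      apply Finset.sum_nonpos
      intro j hj
      have hji : j ≠ i := Finset.ne_of_mem_erase hj
      have := hoff i j (Ne.symm hji)
      have := hvnn j
      nlinarith
    linarith
  have h7 : 1 ≤ A i i * v i := by rw [← hAvi] at *; linarith
  rcases lt_or_eq_of_le (hvnn i) with h | h
  · exact h
  · exfalso; rw [← h] at h7; simp at h7; linarith

lemma gdd {n : ℕ} (M : Matrix (Fin n) (Fin n) ℝ)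
    (hsym : ∀ i j, M i j = M j i)
    (hoff : ∀ i j, i ≠ j → M i j ≤ 0)
    (H : ∀ x : Fin n → ℝ, 0 ≤ x ⬝ᵥ (M *ᵥ x)) :
    ∀ S : Finset (Fin n), ∃ v : Fin n → ℝ,
      (∀ i ∈ S, 0 < v i) ∧ (∀ i ∉ S, v i = 0) ∧ ∀ i ∈ S, 0 ≤ (M *ᵥ v) i := by
  intro S
  induction S using Finset.strongInduction with
  | _ S ih =>
  classical
  by_cases hPD : ∀ z : Fin n → ℝ, (∀ i ∉ S, z i = 0) → z ≠ 0 → 0 < z ⬝ᵥ (M *ᵥ z)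
  · set A : Matrix (Fin n) (Fin n) ℝ :=
      fun i j => if i ∈ S ∧ j ∈ S then M i j else (if i = j then 1 else 0) with hA
    have hAoff : ∀ i j, i ≠ j → A i j ≤ 0 := by
      intro i j hij
      simp only [hA]
      by_cases h : i ∈ S ∧ j ∈ S
      · rw [if_pos h]; exact hoff i j hij
      · rw [if_neg h, if_neg hij]
    have key : ∀ x : Fin n → ℝ,
        x ⬝ᵥ (A *ᵥ x) = (fun i => if i ∈ S then x i else 0) ⬝ᵥ
          (M *ᵥ (fun i => if i ∈ S then x i else 0))
          + ∑ i, (if i ∈ S then 0 else x i ^ 2) := by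
      intro x
      simp only [dotProduct, Matrix.mulVec, ← Finset.sum_add_distrib]
      apply Finset.sum_congr rfl
      intro i _
      by_cases hi : i ∈ S
      · simp only [if_pos hi, add_zero]
        congr 1
        apply Finset.sum_congr rfl
        intro j _
        by_cases hj : j ∈ S
        · simp only [hA, if_pos (And.intro hi hj), if_pos hj]
        · simp only [hA, if_neg (fun h : i ∈ S ∧ j ∈ S => hj h.2), if_neg hj, mul_zero]
          rw [if_neg (by rintro rfl; exact hj hi), zero_mul]
      · simp only [if_neg hi, zero_mul, zero_add]
        have h4 : ∀ j, A i j * x j = if i = j then x j else 0 := by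
          intro j
          simp only [hA, if_neg (fun h : i ∈ S ∧ j ∈ S => hi h.1)]
          by_cases h : i = j
          · rw [if_pos h, if_pos h, one_mul]
          · rw [if_neg h, if_neg h, zero_mul]
        rw [Finset.sum_congr rfl (fun j _ => h4 j), Finset.sum_ite_eq]
        simp [sq]
    have hApd : A.PosDef := by
      refine Matrix.posDef_iff_dotProduct_mulVec.mpr ⟨?_, ?_⟩
      · show Aᴴ = A
        ext i j
        simp only [Matrix.conjTranspose_apply, star_trivial]
        simp only [hA]
        by_cases h : j ∈ S ∧ i ∈ S
        · rw [if_pos h, if_pos (And.intro h.2 h.1)]; exact hsym j i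
        · rw [if_neg h, if_neg (fun h' : i ∈ S ∧ j ∈ S => h ⟨h'.2, h'.1⟩)]
          by_cases hij : j = i
          · rw [if_pos hij, if_pos hij.symm]
          · rw [if_neg hij, if_neg (fun h' => hij h'.symm)]
      · intro x hx
        simp only [star_trivial]
        rw [key x]
        by_cases hsupp : ∀ i ∉ S, x i = 0
        · have hxSx : (fun i => if i ∈ S then x i else 0) = x := by
            funext i
            by_cases hi : i ∈ S
            · rw [if_pos hi]
            · rw [if_neg hi, hsupp i hi]
          rw [hxSx]
          have h2 : (∑ i, (if i ∈ S then (0:ℝ) else x i ^ 2)) = 0 := by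
            apply Finset.sum_eq_zero
            intro i _
            by_cases hi : i ∈ S
            · rw [if_pos hi]
            · rw [if_neg hi, hsupp i hi]; ring
          rw [h2, add_zero]
          exact hPD x hsupp hx
        · push_neg at hsupp
          obtain ⟨i0, hi0, hxi0⟩ := hsupp
          have h1 : 0 ≤ (fun i => if i ∈ S then x i else 0) ⬝ᵥ
              (M *ᵥ (fun i => if i ∈ S then x i else 0)) := H _
          have h2 : x i0 ^ 2 ≤ ∑ i, (if i ∈ S then (0:ℝ) else x i ^ 2) := by
            have h5 := Finset.single_le_sum
              (f := fun i => if i ∈ S then (0:ℝ) else x i ^ 2)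
              (fun i _ => by positivity) (Finset.mem_univ i0)
            simpa only [if_neg hi0] using h5
          have h3 : 0 < x i0 ^ 2 := by positivity
          linarith
    obtain ⟨v0, hv0pos, hv0⟩ := pd_pos_solution A hApd hAoff
    refine ⟨fun i => if i ∈ S then v0 i else 0, ?_, ?_, ?_⟩
    · intro i hi; simp only [if_pos hi]; exact hv0pos i
    · intro i hi; simp only [if_neg hi]
    · intro i hi
      have h6 : (M *ᵥ fun i => if i ∈ S then v0 i else 0) i = (A *ᵥ v0) i := by
        simp only [Matrix.mulVec, dotProduct]
        apply Finset.sum_congr rfl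
        intro j _
        by_cases hj : j ∈ S
        · rw [if_pos hj]
          simp only [hA, if_pos (And.intro hi hj)]
        · rw [if_neg hj, mul_zero]
          simp only [hA, if_neg (fun h : i ∈ S ∧ j ∈ S => hj h.2)]
          rw [if_neg (by rintro rfl; exact hj hi), zero_mul]
      rw [h6, hv0]
      norm_num
  · push_neg at hPD
    obtain ⟨z, hzsupp, hzne, hzle⟩ := hPD
    set z' : Fin n → ℝ := fun i => |z i| with hz'
    have hz'nn : ∀ i, 0 ≤ z' i := fun i => abs_nonneg _
    have hQle : z' ⬝ᵥ (M *ᵥ z') ≤ z ⬝ᵥ (M *ᵥ z) := by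
      simp only [dotProduct, Matrix.mulVec, Finset.mul_sum]
      apply Finset.sum_le_sum
      intro i _
      apply Finset.sum_le_sum
      intro j _
      by_cases hij : i = j
      · subst hij
        apply le_of_eq
        simp only [hz']
        linear_combination (M i i) * (abs_mul_abs_self (z i))
      · have h1 : z i * z j ≤ |z i| * |z j| := by
          rw [← abs_mul]; exact le_abs_self _
        have h2 : M i j * (|z i| * |z j|) ≤ M i j * (z i * z j) :=
          mul_le_mul_of_nonpos_left h1 (hoff i j hij)
        simp only [hz']
        nlinarith [h2]
    have hz0 : z' ⬝ᵥ (M *ᵥ z') = 0 := le_antisymm (hQle.trans hzle) (H z')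
    have hker := null_ker M hsym H z' hz0
    obtain ⟨i0, hzi0⟩ : ∃ i, z i ≠ 0 := Function.ne_iff.mp hzne
    have hi0S : i0 ∈ S := by
      by_contra h
      exact hzi0 (hzsupp i0 h)
    have hz'i0 : z' i0 ≠ 0 := by simp [hz', hzi0]
    set Z : Finset (Fin n) := S.filter (fun i => z' i = 0) with hZ
    have hZsub : Z ⊆ S := Finset.filter_subset _ _
    have hi0Z : i0 ∉ Z := by
      intro h
      exact hz'i0 ((Finset.mem_filter.mp h).2)
    have hss : Z ⊂ S := (Finset.ssubset_iff_of_subset hZsub).mpr ⟨i0, hi0S, hi0Z⟩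
    obtain ⟨vZ, hv1, hv2, hv3⟩ := ih Z hss
    have hz'S : ∀ i ∉ S, z' i = 0 := by
      intro i hi
      simp [hz', hzsupp i hi]
    refine ⟨z' + vZ, ?_, ?_, ?_⟩
    · intro i hi
      by_cases hiZ : i ∈ Z
      · have hzz : z' i = 0 := (Finset.mem_filter.mp hiZ).2
        have := hv1 i hiZ
        simp only [Pi.add_apply, hzz, zero_add]
        exact this
      · have hzz : z' i ≠ 0 := fun h => hiZ (Finset.mem_filter.mpr ⟨hi, h⟩)
        have h7 : 0 < z' i := lt_of_le_of_ne (hz'nn i) (Ne.symm hzz)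
        have h8 : vZ i = 0 := hv2 i hiZ
        simp only [Pi.add_apply, h8, add_zero]
        exact h7
    · intro i hi
      have h8 : vZ i = 0 := hv2 i (fun h => hi (hZsub h))
      simp only [Pi.add_apply, h8, add_zero]
      exact hz'S i hi
    · intro i hi
      rw [Matrix.mulVec_add]
      simp only [Pi.add_apply, hker i, zero_add]
      by_cases hiZ : i ∈ Z
      · exact hv3 i hiZ
      · have hzz : z' i ≠ 0 := fun h => hiZ (Finset.mem_filter.mpr ⟨hi, h⟩)
        apply le_of_eq
        symm
        show (M *ᵥ vZ) i = 0
        simp only [Matrix.mulVec, dotProduct]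
        apply Finset.sum_eq_zero
        intro j _
        by_cases hjZ : j ∈ Z
        · have hz'j : z' j = 0 := (Finset.mem_filter.mp hjZ).2
          have hkj : (∑ k, M j k * z' k) = 0 := by
            have := hker j
            simpa [Matrix.mulVec, dotProduct] using this
          have hterm : ∀ k ∈ Finset.univ, M j k * z' k ≤ 0 := by
            intro k _
            by_cases hk : j = k
            · subst hk
              rw [hz'j, mul_zero]
            · exact mul_nonpos_iff.mpr (Or.inr ⟨hoff j k hk, hz'nn k⟩)
          have hall := (Finset.sum_eq_zero_iff_of_nonpos hterm).mp hkj
          have hMji : M j i * z' i = 0 := hall i (Finset.mem_univ i)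
          have hMji0 : M j i = 0 := by
            rcases mul_eq_zero.mp hMji with h | h
            · exact h
            · exact absurd h hzz
          rw [hsym i j, hMji0, zero_mul]
        · rw [hv2 j hjZ, mul_zero]

lemma quad_eval {n : ℕ} (u : Fin n → Fin n → ℝ) (d : Fin n → ℝ) (x : Fin n → ℝ) :
    x ⬝ᵥ (Mmat u d *ᵥ x)
      = (∑ i, d i * x i ^ 2)
        - ∑ ij ∈ Finset.univ.filter (fun ij : Fin n × Fin n => ij.1 < ij.2),
            csym u ij.1 ij.2 * x ij.1 * x ij.2 := by
  classical
  have hterm : ∀ i j, x i * (Mmat u d i j * x j)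
      = (if i = j then d i * x i ^ 2 else 0)
        + (-(1:ℝ)/2) * (csym u i j * x i * x j) := by
    intro i j
    unfold Mmat
    by_cases h : i = j
    · subst h; rw [if_pos rfl, if_pos rfl, csym_diag]; ring
    · rw [if_neg h, if_neg h]; ring
  have hexp : x ⬝ᵥ (Mmat u d *ᵥ x) = ∑ i, ∑ j, x i * (Mmat u d i j * x j) := by
    simp only [dotProduct, Matrix.mulVec, Finset.mul_sum]
  rw [hexp]
  rw [Finset.sum_congr rfl (fun i _ => Finset.sum_congr rfl (fun j _ => hterm i j))]
  rw [Finset.sum_congr rfl (fun i _ => Finset.sum_add_distrib), Finset.sum_add_distrib]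
  have hA : (∑ i, ∑ j, (if i = j then d i * x i ^ 2 else 0)) = ∑ i, d i * x i ^ 2 := by
    apply Finset.sum_congr rfl
    intro i _
    rw [Finset.sum_ite_eq]
    simp
  have hps := pair_sum_eq (fun i j => csym u i j * x i * x j)
    (fun i => show csym u i i * x i * x i = 0 by rw [csym_diag]; ring)
  have hB : (∑ i, ∑ j, (-(1:ℝ)/2) * (csym u i j * x i * x j))
      = - ∑ ij ∈ Finset.univ.filter (fun ij : Fin n × Fin n => ij.1 < ij.2),
          csym u ij.1 ij.2 * x ij.1 * x ij.2 := by
    rw [Finset.sum_congr rfl (fun i (_ : i ∈ Finset.univ) => (Finset.mul_sum _ _ _).symm),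
      ← Finset.mul_sum, hps]
    rw [Finset.sum_congr rfl (fun ij hij => show
        csym u ij.1 ij.2 * x ij.1 * x ij.2 + csym u ij.2 ij.1 * x ij.2 * x ij.1
          = 2 * (csym u ij.1 ij.2 * x ij.1 * x ij.2) by
        rw [csym_symm u ij.2 ij.1]; ring)]
    rw [← Finset.mul_sum]
    ring
  rw [hA, hB]
  ring

lemma mulVec_formula {n : ℕ} (u : Fin n → Fin n → ℝ) (d : Fin n → ℝ)
    (v : Fin n → ℝ) (i : Fin n) :
    (Mmat u d *ᵥ v) i = d i * v i - (∑ j, csym u i j * v j) / 2 := by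
  classical
  have hterm : ∀ j, Mmat u d i j * v j
      = (if i = j then d i * v i else 0) + (-(csym u i j * v j) / 2) := by
    intro j
    unfold Mmat
    by_cases h : i = j
    · subst h; rw [if_pos rfl, if_pos rfl, csym_diag]; ring
    · rw [if_neg h, if_neg h]; ring
  show (∑ j, Mmat u d i j * v j) = _
  rw [Finset.sum_congr rfl (fun j _ => hterm j), Finset.sum_add_distrib, Finset.sum_ite_eq]
  have h1 : (∑ j, -(csym u i j * v j) / 2) = -((∑ j, csym u i j * v j) / 2) := by
    rw [← Finset.sum_div, Finset.sum_neg_distrib, neg_div]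
  rw [h1]
  simp
  ring

open MvPolynomial

noncomputable def Pco {n : ℕ} (u : Fin n → Fin n → ℝ) (v : Fin n → ℝ)
    (ij : Fin n × Fin n) : ℝ :=
  Real.sqrt (csym u ij.1 ij.2 * v ij.2 / (2 * v ij.1))

noncomputable def Rco {n : ℕ} (u : Fin n → Fin n → ℝ) (v : Fin n → ℝ)
    (ij : Fin n × Fin n) : ℝ :=
  if csym u ij.1 ij.2 = 0 then 0 else wsym u ij.1 ij.2 / (2 * Pco u v ij)

noncomputable def slk {n : ℕ} (u : Fin n → Fin n → ℝ) (d : Fin n → ℝ)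
    (v : Fin n → ℝ) (i : Fin n) : ℝ :=
  d i - (∑ j, csym u i j * v j) / (2 * v i)

lemma Pco_sq {n : ℕ} (u : Fin n → Fin n → ℝ) (v : Fin n → ℝ) (hv : ∀ i, 0 < v i)
    (ij : Fin n × Fin n) :
    Pco u v ij ^ 2 = csym u ij.1 ij.2 * v ij.2 / (2 * v ij.1) := by
  apply Real.sq_sqrt
  apply div_nonneg (mul_nonneg (csym_nonneg _ _ _) (hv _).le)
  exact (mul_pos two_pos (hv _)).le

lemma Pco_pos {n : ℕ} (u : Fin n → Fin n → ℝ) (v : Fin n → ℝ) (hv : ∀ i, 0 < v i)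
    (ij : Fin n × Fin n) (hc : csym u ij.1 ij.2 ≠ 0) : 0 < Pco u v ij := by
  apply Real.sqrt_pos.mpr
  apply div_pos (mul_pos ((csym_nonneg u _ _).lt_of_ne (Ne.symm hc)) (hv _))
  exact mul_pos two_pos (hv _)

lemma two_Pco_Rco {n : ℕ} (u : Fin n → Fin n → ℝ) (v : Fin n → ℝ) (hv : ∀ i, 0 < v i)
    (ij : Fin n × Fin n) :
    2 * Pco u v ij * Rco u v ij = wsym u ij.1 ij.2 := by
  by_cases hc : csym u ij.1 ij.2 = 0
  · rw [Rco, if_pos hc, mul_zero]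
    have : |wsym u ij.1 ij.2| = 0 := by rw [abs_wsym, hc]
    rw [← abs_eq_zero.mp this]
  · rw [Rco, if_neg hc]
    have hP := Pco_pos u v hv ij hc
    field_simp

lemma Rco_sq {n : ℕ} (u : Fin n → Fin n → ℝ) (v : Fin n → ℝ) (hv : ∀ i, 0 < v i)
    (ij : Fin n × Fin n) :
    Rco u v ij ^ 2 = csym u ij.1 ij.2 * v ij.1 / (2 * v ij.2) := by
  by_cases hc : csym u ij.1 ij.2 = 0
  · rw [Rco, if_pos hc, hc]
    simp
  · rw [Rco, if_neg hc, div_pow, mul_pow, Pco_sq u v hv]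
    have hw2 : wsym u ij.1 ij.2 ^ 2 = csym u ij.1 ij.2 ^ 2 := by
      rw [← sq_abs, abs_wsym]
    rw [hw2]
    have h1 : v ij.1 ≠ 0 := (hv _).ne'
    have h2 : v ij.2 ≠ 0 := (hv _).ne'
    field_simp

lemma pair_sq {n : ℕ} (u : Fin n → Fin n → ℝ) (v : Fin n → ℝ) (hv : ∀ i, 0 < v i)
    (ij : Fin n × Fin n) (x : Fin n → ℝ)
    (hcs : csym u ij.2 ij.1 = csym u ij.1 ij.2) :
    (Pco u v ij * x ij.1 + Rco u v ij * x ij.2) ^ 2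
      = csym u ij.1 ij.2 * v ij.2 / (2 * v ij.1) * x ij.1 ^ 2
        + csym u ij.2 ij.1 * v ij.1 / (2 * v ij.2) * x ij.2 ^ 2
        + wsym u ij.1 ij.2 * x ij.1 * x ij.2 := by
  have e1 := Pco_sq u v hv ij
  have e2 := Rco_sq u v hv ij
  have e3 := two_Pco_Rco u v hv ij
  rw [hcs]
  linear_combination x ij.1 ^ 2 * e1 + x ij.2 ^ 2 * e2 + x ij.1 * x ij.2 * e3

noncomputable def Bpoly {n : ℕ} (u : Fin n → Fin n → ℝ) (v : Fin n → ℝ)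
    (ij : Fin n × Fin n) : MvPolynomial (Fin n) ℝ :=
  if ij.1 < ij.2 then C (Pco u v ij) * X ij.1 + C (Rco u v ij) * X ij.2 else 0

noncomputable def MonoP {n : ℕ} (u : Fin n → Fin n → ℝ) (d : Fin n → ℝ)
    (v : Fin n → ℝ) (i : Fin n) : MvPolynomial (Fin n) ℝ :=
  C (Real.sqrt (slk u d v i)) * X i

lemma support_CX {n : ℕ} (a : ℝ) (i : Fin n) :
    (C a * X i : MvPolynomial (Fin n) ℝ).support.card ≤ 1 := by
  classical
  rw [C_mul_X_eq_monomial, support_monomial]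
  split
  · simp
  · simp

lemma support_Bpoly {n : ℕ} (u : Fin n → Fin n → ℝ) (v : Fin n → ℝ)
    (ij : Fin n × Fin n) : (Bpoly u v ij).support.card ≤ 2 := by
  classical
  unfold Bpoly
  split
  · apply le_trans (Finset.card_le_card (support_add))
    apply le_trans (Finset.card_union_le _ _)
    have := support_CX (Pco u v ij) ij.1
    have := support_CX (Rco u v ij) ij.2
    omega
  · simp

lemma support_MonoP {n : ℕ} (u : Fin n → Fin n → ℝ) (d : Fin n → ℝ)
    (v : Fin n → ℝ) (i : Fin n) : (MonoP u d v i).support.card ≤ 2 := by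
  have := support_CX (Real.sqrt (slk u d v i)) i
  unfold MonoP
  omega


end SOBS


open MvPolynomial in
/-- if `q̂ (x) = ∑ qᵢ xᵢ² - ∑_{i<j} |qᵢⱼ| xᵢ xⱼ` is nonnegative, then
`q(x) = ∑ qᵢ xᵢ² + ∑_{i<j} qᵢⱼ xᵢ xⱼ` is a sum of binomial squares. -/
theorem stmt16 (n : ℕ) (d : Fin n → ℝ) (u : Fin n → Fin n → ℝ)
    (q qhat : MvPolynomial (Fin n) ℝ)
    (hq : q = (∑ i, C (d i) * X i ^ 2)
      + ∑ ij ∈ Finset.univ.filter (fun ij : Fin n × Fin n => ij.1 < ij.2),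
          C (u ij.1 ij.2) * X ij.1 * X ij.2)
    (hqhat : qhat = (∑ i, C (d i) * X i ^ 2)
      - ∑ ij ∈ Finset.univ.filter (fun ij : Fin n × Fin n => ij.1 < ij.2),
          C |u ij.1 ij.2| * X ij.1 * X ij.2)
    (hnonneg : ∀ x : Fin n → ℝ, 0 ≤ eval x qhat) :
    IsSOkS 2 q := by
  classical
  have Hq : ∀ x : Fin n → ℝ, 0 ≤ x ⬝ᵥ (SOBS.Mmat u d *ᵥ x) := by
    intro x
    rw [SOBS.quad_eval]
    have h := hnonneg x
    rw [hqhat] at h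
    simp only [_root_.map_sub, _root_.map_sum, _root_.map_mul, _root_.map_pow, eval_C, eval_X] at h
    have h2 : ∑ ij ∈ Finset.univ.filter (fun ij : Fin n × Fin n => ij.1 < ij.2),
        SOBS.csym u ij.1 ij.2 * x ij.1 * x ij.2
        = ∑ ij ∈ Finset.univ.filter (fun ij : Fin n × Fin n => ij.1 < ij.2),
            |u ij.1 ij.2| * x ij.1 * x ij.2 := by
      apply Finset.sum_congr rfl
      intro ij hij
      rw [SOBS.csym_lt u (Finset.mem_filter.mp hij).2]
    rw [h2]
    exact h
  obtain ⟨v, hv1, -, hv3⟩ := SOBS.gdd (SOBS.Mmat u d) (SOBS.Mmat_symm u d)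
    (SOBS.Mmat_off u d) Hq Finset.univ
  have hv : ∀ i, 0 < v i := fun i => hv1 i (Finset.mem_univ i)
  have hslk : ∀ i, 0 ≤ SOBS.slk u d v i := by
    intro i
    have h := hv3 i (Finset.mem_univ i)
    rw [SOBS.mulVec_formula] at h
    have he : SOBS.slk u d v i
        = (d i * v i - (∑ j, SOBS.csym u i j * v j) / 2) / v i := by
      unfold SOBS.slk
      have hvne : v i ≠ 0 := (hv i).ne'
      field_simp
    rw [he]
    exact div_nonneg h (hv i).le
  refine ⟨Fintype.card ((Fin n × Fin n) ⊕ (Fin n)),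
    fun k => Sum.elim (SOBS.Bpoly u v) (SOBS.MonoP u d v)
      ((Fintype.equivFin ((Fin n × Fin n) ⊕ (Fin n))).symm k), ?_, ?_⟩
  · intro k
    beta_reduce
    rcases hk : (Fintype.equivFin ((Fin n × Fin n) ⊕ (Fin n))).symm k with ij | i
    · rw [Sum.elim_inl]
      exact SOBS.support_Bpoly u v ij
    · rw [Sum.elim_inr]
      exact SOBS.support_MonoP u d v i
  · beta_reduce
    have hsum1 : (∑ k : Fin (Fintype.card ((Fin n × Fin n) ⊕ (Fin n))),
        (Sum.elim (SOBS.Bpoly u v) (SOBS.MonoP u d v)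
          ((Fintype.equivFin ((Fin n × Fin n) ⊕ (Fin n))).symm k)) ^ 2)
        = ∑ a : (Fin n × Fin n) ⊕ (Fin n),
            (Sum.elim (SOBS.Bpoly u v) (SOBS.MonoP u d v) a) ^ 2 :=
      Fintype.sum_equiv ((Fintype.equivFin ((Fin n × Fin n) ⊕ (Fin n))).symm) _ _
        (fun k => rfl)
    rw [hsum1, Fintype.sum_sum_type]
    simp only [Sum.elim_inl, Sum.elim_inr]
    have hBsum : (∑ ij : Fin n × Fin n, (SOBS.Bpoly u v ij) ^ 2)
        = ∑ ij ∈ Finset.univ.filter (fun ij : Fin n × Fin n => ij.1 < ij.2),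
            (C (SOBS.Pco u v ij) * X ij.1 + C (SOBS.Rco u v ij) * X ij.2) ^ 2 := by
      rw [Finset.sum_filter]
      apply Finset.sum_congr rfl
      intro ij _
      unfold SOBS.Bpoly
      by_cases h : ij.1 < ij.2
      · rw [if_pos h, if_pos h]
      · rw [if_neg h, if_neg h]
        simp
    rw [hBsum]
    apply MvPolynomial.funext
    intro x
    rw [hq]
    simp only [_root_.map_add, _root_.map_sum, _root_.map_mul, _root_.map_pow, eval_C, eval_X, SOBS.MonoP]
    have hps : ∑ ij ∈ Finset.univ.filter (fun ij : Fin n × Fin n => ij.1 < ij.2),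
        (SOBS.Pco u v ij * x ij.1 + SOBS.Rco u v ij * x ij.2) ^ 2
        = ∑ ij ∈ Finset.univ.filter (fun ij : Fin n × Fin n => ij.1 < ij.2),
            (SOBS.csym u ij.1 ij.2 * v ij.2 / (2 * v ij.1) * x ij.1 ^ 2
              + SOBS.csym u ij.2 ij.1 * v ij.1 / (2 * v ij.2) * x ij.2 ^ 2
              + SOBS.wsym u ij.1 ij.2 * x ij.1 * x ij.2) :=
      Finset.sum_congr rfl fun ij _ =>
        SOBS.pair_sq u v hv ij x (SOBS.csym_symm u ij.2 ij.1)
    rw [hps, Finset.sum_add_distrib]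
    have h2p := (SOBS.pair_sum_eq
      (fun i j => SOBS.csym u i j * v j / (2 * v i) * x i ^ 2)
      (fun i => show SOBS.csym u i i * v i / (2 * v i) * x i ^ 2 = 0 by
        rw [SOBS.csym_diag]; ring)).symm
    rw [h2p]
    have h5 : (∑ i, ∑ j, SOBS.csym u i j * v j / (2 * v i) * x i ^ 2)
        = ∑ i, (∑ j, SOBS.csym u i j * v j) * (x i ^ 2 / (2 * v i)) := by
      apply Finset.sum_congr rfl
      intro i _
      rw [Finset.sum_mul]
      apply Finset.sum_congr rfl
      intro j _
      ring
    rw [h5]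
    have hcross : ∑ ij ∈ Finset.univ.filter (fun ij : Fin n × Fin n => ij.1 < ij.2),
        u ij.1 ij.2 * x ij.1 * x ij.2
        = ∑ ij ∈ Finset.univ.filter (fun ij : Fin n × Fin n => ij.1 < ij.2),
            SOBS.wsym u ij.1 ij.2 * x ij.1 * x ij.2 := by
      apply Finset.sum_congr rfl
      intro ij hij
      rw [SOBS.wsym_lt u (Finset.mem_filter.mp hij).2]
    rw [hcross]
    have hmono : ∀ i, (Real.sqrt (SOBS.slk u d v i) * x i) ^ 2
        = SOBS.slk u d v i * x i ^ 2 := by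
      intro i
      rw [mul_pow, Real.sq_sqrt (hslk i)]
    have h6 : (∑ i, (Real.sqrt (SOBS.slk u d v i) * x i) ^ 2)
        = ∑ i, SOBS.slk u d v i * x i ^ 2 :=
      Finset.sum_congr rfl fun i _ => hmono i
    rw [h6]
    have hfin : (∑ i, d i * x i ^ 2)
        = ∑ i, ((∑ j, SOBS.csym u i j * v j) * (x i ^ 2 / (2 * v i))
            + SOBS.slk u d v i * x i ^ 2) := by
      apply Finset.sum_congr rfl
      intro i _
      unfold SOBS.slk
      ring
    rw [hfin, Finset.sum_add_distrib]
    ring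
end
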